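/- arXiv:2410.22486 — 8 statements merged into one kernel-verified Lean document; each statement's English description precedes it below -/
import Mathlib

section
/- For the Catalan numbers C_n = binom(2n,n)/(n+1), the k-fold convolution satisfies sum over (j_1,...,j_k) nonnegative integers with j_1+...+j_k = n of C_{j_1}···C_{j_k} = (k/(2n+k)) * binom(2n+k, n). -/
/-!
Let `C = ∑ catalan n Xⁿ`. From `C = 1 + X C²` we get `C^(k+1) = C^k + X C^(k+2)`, so the
coefficients `[Xⁿ] C^k` obey the recurrence `a(n+1, k+1) = a(n+1, k) + a(n, k+2)`. The closed
form `k/(2n+k) · binom(2n+k, n)` obeys the same recurrence and the same boundary values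
(`1` at `n = 0`, `k ≠ 0`, and `0` at `k = 0`, `n ≠ 0`), and `[Xⁿ] C^k` is the `k`-fold convolution.
-/

open Finset PowerSeries

theorem PowerSeries.coeff_pow_eq_sum_antidiagonalTuple {R : Type*} [CommSemiring R]
    (φ : R⟦X⟧) (k n : ℕ) :
    coeff n (φ ^ k) = ∑ j ∈ Nat.antidiagonalTuple k n, ∏ i, coeff (j i) φ := by
  rw [← Fin.prod_const, coeff_prod]
  exact Finset.sum_equiv Finsupp.equivFunOnFinite (by simp [Nat.mem_antidiagonalTuple])
    (by simp)

theorem PowerSeries.catalanSeries_pow_succ (k : ℕ) :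
    catalanSeries ^ (k + 1) = catalanSeries ^ k + catalanSeries ^ (k + 2) * X :=
  calc catalanSeries ^ (k + 1) = catalanSeries ^ k * catalanSeries := pow_succ _ _
    _ = catalanSeries ^ k * (catalanSeries ^ 2 * X + 1) := by
      rw [catalanSeries_sq_mul_X_add_one]
    _ = catalanSeries ^ k + catalanSeries ^ (k + 2) * X := by ring

noncomputable def catalanPowCoeff (n k : ℕ) : ℚ := k / (2 * n + k) * (2 * n + k).choose n

theorem catalanPowCoeff_zero_left {k : ℕ} (hk : k ≠ 0) : catalanPowCoeff 0 k = 1 := by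
  simp [catalanPowCoeff, hk]

theorem catalanPowCoeff_succ_zero (n : ℕ) : catalanPowCoeff (n + 1) 0 = 0 := by
  simp [catalanPowCoeff]

theorem catalanPowCoeff_succ_succ (n k : ℕ) :
    catalanPowCoeff (n + 1) (k + 1) = catalanPowCoeff (n + 1) k + catalanPowCoeff n (k + 2) := by
  obtain ⟨N, hN⟩ : ∃ N, N = 2 * n + k + 2 := ⟨_, rfl⟩
  have hN₁ : 2 * (n + 1) + (k + 1) = N + 1 := by omega
  have hN₀ : 2 * (n + 1) + k = N := by omega
  have hN₂ : 2 * n + (k + 2) = N := by omega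
  have hNq : (N : ℚ) = 2 * n + k + 2 := by exact_mod_cast hN
  have pascal : ((N + 1).choose (n + 1) : ℚ) = (N + 1) * N.choose n / (n + 1) := by
    rw [eq_div_iff (by positivity)]
    exact_mod_cast (Nat.add_one_mul_choose_eq N n).symm
  have shift : (N.choose (n + 1) : ℚ) = N.choose n * (n + k + 2) / (n + 1) := by
    rw [eq_div_iff (by positivity)]
    have := Nat.choose_succ_right_eq N n
    rw [show N - n = n + k + 2 by omega] at this
    exact_mod_cast this
  simp only [catalanPowCoeff, hN₁, hN₀, hN₂]
  push_cast
  rw [pascal, shift, hNq]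
  field_simp
  ring

theorem coeff_catalanSeries_pow {n k : ℕ} (h : n ≠ 0 ∨ k ≠ 0) :
    ((coeff n (catalanSeries ^ k) : ℕ) : ℚ) = catalanPowCoeff n k := by
  induction n generalizing k with
  | zero =>
    rw [coeff_zero_eq_constantCoeff_apply, map_pow, catalanSeries_constantCoeff, one_pow,
      catalanPowCoeff_zero_left (h.resolve_left (by simp)), Nat.cast_one]
  | succ n ihn =>
    induction k with
    | zero => simp [catalanPowCoeff_succ_zero]
    | succ k ihk =>
      rw [catalanSeries_pow_succ, map_add, coeff_succ_mul_X, Nat.cast_add,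
        ihk (Or.inl n.succ_ne_zero), ihn (Or.inr (by omega)), catalanPowCoeff_succ_succ]

/-- k-fold convolution of Catalan numbers: `∑_{j₁+⋯+j_k=n} C_{j₁}⋯C_{j_k} = (k/(2n+k))·C(2n+k, n)`. -/
theorem catalan_multifold_convolution (k n : ℕ) (hk : 1 ≤ k) :
    (∑ j ∈ Finset.Nat.antidiagonalTuple k n, ∏ i, (catalan (j i) : ℚ))
      = (k : ℚ) / (2 * n + k) * ((2 * n + k).choose n : ℚ) :=
  calc ∑ j ∈ Finset.Nat.antidiagonalTuple k n, ∏ i, (catalan (j i) : ℚ)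
      = ((coeff n (catalanSeries ^ k) : ℕ) : ℚ) := by
        simp [coeff_pow_eq_sum_antidiagonalTuple]
    _ = catalanPowCoeff n k := coeff_catalanSeries_pow (Or.inr (by omega))
end

section
/- For the central binomial coefficients B_n = binom(2n,n), the k-fold convolution satisfies sum over (j_1,...,j_k) nonnegative integers with j_1+...+j_k = n of B_{j_1}···B_{j_k} = 4^n * (falling factorial of (n-1+k/2) of length n) / n!. -/
/-!
Writing `B_n = (-4)^n · binom(-1/2, n)` (the coefficients of `(1 - 4t)^{-1/2}`), the
Chu–Vandermonde identity for generalized binomial coefficients turns the `k`-fold convolution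
into `(-4)^n · binom(-k/2, n)`, and negating the upper index gives `4^n · binom(n - 1 + k/2, n)`.
-/

open Finset Polynomial

theorem Ring.choose_eq_prod_range_div_factorial {K : Type*} [Field K] [CharZero K] (x : K)
    (n : ℕ) : Ring.choose x n = (∏ i ∈ range n, (x - i)) / n.factorial := by
  rw [choose_eq_smul, ← aeval_eq_smeval, aeval_def, eval₂_eq_eval_map, descPochhammer_map,
    descPochhammer_eval_eq_prod_range, smul_eq_mul, inv_mul_eq_div]

theorem Ring.choose_succ_eq_choose_mul_div {K : Type*} [Field K] [CharZero K] (x : K) (n : ℕ) :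
    Ring.choose x (n + 1) = Ring.choose x n * (x - n) / (n + 1) := by
  simp only [Ring.choose_eq_prod_range_div_factorial, prod_range_succ, Nat.factorial_succ]
  push_cast
  rw [div_mul_eq_mul_div, div_div, mul_comm (n.factorial : K)]

theorem Nat.cast_centralBinom_eq_neg_four_pow_mul_choose {K : Type*} [Field K] [CharZero K]
    (n : ℕ) : (n.centralBinom : K) = (-4) ^ n * Ring.choose (-1 / 2 : K) n := by
  induction n with
  | zero => simp
  | succ n ih =>
    have hrec : ((n + 1 : ℕ) : K) * (n + 1).centralBinom = 2 * (2 * n + 1) * n.centralBinom := by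
      exact_mod_cast n.succ_mul_centralBinom_succ
    have hn : (n + 1 : K) ≠ 0 := n.cast_add_one_ne_zero
    push_cast at hrec
    rw [Ring.choose_succ_eq_choose_mul_div, ← mul_right_inj' hn, hrec, ih]
    field_simp
    ring

theorem Finset.Nat.sum_antidiagonalTuple_succ {M : Type*} [AddCommMonoid M] (k n : ℕ)
    (g : (Fin (k + 1) → ℕ) → M) :
    ∑ j ∈ Nat.antidiagonalTuple (k + 1) n, g j =
      ∑ p ∈ antidiagonal n, ∑ j ∈ Nat.antidiagonalTuple k p.2, g (Fin.cons p.1 j) := by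
  simp only [Finset.sum_eq_multiset_sum]
  -- both finsets are, by definition, lists; the list of tuples recurses on the first coordinate
  change (Multiset.map g ↑(List.Nat.antidiagonalTuple (k + 1) n)).sum =
    (Multiset.map (fun p : ℕ × ℕ => (Multiset.map (fun j => g (Fin.cons p.1 j))
      ↑(List.Nat.antidiagonalTuple k p.2)).sum) ↑(List.Nat.antidiagonal n)).sum
  simp [List.Nat.antidiagonalTuple, List.flatMap_def, List.sum_flatten, Function.comp_def]

theorem Ring.sum_prod_choose_antidiagonalTuple {R : Type*} [CommRing R] [BinomialRing R]
    (r : R) (k n : ℕ) :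
    ∑ j ∈ Finset.Nat.antidiagonalTuple k n, ∏ i, choose r (j i) = choose (k • r) n := by
  induction k generalizing n with
  | zero => cases n <;> simp [choose_zero_succ]
  | succ k ih =>
    simp_rw [Finset.Nat.sum_antidiagonalTuple_succ, Fin.prod_univ_succ, Fin.cons_zero,
      Fin.cons_succ, ← mul_sum, ih]
    rw [succ_nsmul', add_choose_eq n (Commute.all r (k • r))]

theorem centralBinom_multifold_convolution_general (k n : ℕ) :
    (∑ j ∈ Finset.Nat.antidiagonalTuple k n, ∏ i, (((2 * j i).choose (j i) : ℚ)))
      = 4 ^ n * (∏ i ∈ Finset.range n, ((n : ℚ) - 1 + (k : ℚ) / 2 - (i : ℚ))) / (n.factorial : ℚ) := by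
  calc ∑ j ∈ Finset.Nat.antidiagonalTuple k n, ∏ i, (((2 * j i).choose (j i) : ℚ))
      = ∑ j ∈ Finset.Nat.antidiagonalTuple k n, (-4) ^ n * ∏ i, Ring.choose (-1 / 2 : ℚ) (j i) := by
        refine sum_congr rfl fun j hj => ?_
        simp only [← Nat.centralBinom_eq_two_mul_choose,
          Nat.cast_centralBinom_eq_neg_four_pow_mul_choose, prod_mul_distrib, prod_pow_eq_pow_sum,
          Finset.Nat.mem_antidiagonalTuple.1 hj]
    _ = (-4) ^ n * Ring.choose (-((k : ℚ) / 2)) n := by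
        rw [← mul_sum, Ring.sum_prod_choose_antidiagonalTuple, nsmul_eq_mul]
        ring_nf
    _ = 4 ^ n * Ring.choose ((k : ℚ) / 2 + n - 1) n := by
        rw [Ring.choose_neg, Units.smul_def, Int.coe_negOnePow_natCast, zsmul_eq_mul, ← mul_assoc,
          Int.cast_pow, Int.cast_neg, Int.cast_one, ← mul_pow]
        norm_num
    _ = _ := by
        rw [Ring.choose_eq_prod_range_div_factorial, mul_div_assoc]
        ring_nf

/-- k-fold convolution of central binomial coefficients:
`∑_{j₁+⋯+j_k=n} B_{j₁}⋯B_{j_k} = 4^n · (n-1+k/2)_n / n!`, where `(x)_n` is the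
falling factorial `x(x-1)⋯(x-n+1)`. -/
theorem centralBinom_multifold_convolution (k n : ℕ) (hk : 1 ≤ k) :
    (∑ j ∈ Finset.Nat.antidiagonalTuple k n, ∏ i, (((2 * j i).choose (j i) : ℚ)))
      = 4 ^ n * (∏ i ∈ Finset.range n, ((n : ℚ) - 1 + (k : ℚ) / 2 - (i : ℚ))) / (n.factorial : ℚ) :=
  centralBinom_multifold_convolution_general k n
end

section
/- For each fixed natural number r ≥ 0, as n → ∞, sum_{k=1}^{n-1} (ln k)^r / (k(n-k)) is asymptotic to ((r+2)/(r+1)) * (ln n)^{r+1} / n. -/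
/-!
By partial fractions, `1 / (k (n - k)) = (1 / k + 1 / (n - k)) / n`, so `n` times the sum is
`A n + B n` with `A n = ∑ (log k)^r / k` and `B n = ∑ (log k)^r / (n - k)`.

`A n ~ (log n)^(r+1) / (r+1)` by Stolz–Cesàro: `(log k)^r / k` is asymptotic to the increment
of `(log k)^(r+1) / (r+1)` from `k` to `k + 1`, and these increments telescope.

`B n ~ (log n)^(r+1)` by a squeeze: bounding `log k ≤ log n` leaves `(log n)^r` times a harmonic
sum, at most `1 + log n`; keeping only the terms with `n - k ≤ n / 2`, where `log k ≥ log (n / 2)`,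
gives at least `log (n / 2)^r` times the harmonic sum up to `n / 2`, which is `≥ log (n / 2)`.
-/

open Asymptotics Filter Finset Real

namespace Asymptotics

variable {α : Type*} {l : Filter α}

theorem IsEquivalent.of_le_of_le {f g lo hi : α → ℝ} (hlo : lo ~[l] g) (hhi : hi ~[l] g)
    (h₁ : lo ≤ᶠ[l] f) (h₂ : f ≤ᶠ[l] hi) : f ~[l] g := by
  refine IsBigO.trans_isLittleO ?_ (hlo.isLittleO.norm_left.add hhi.isLittleO.norm_left)
  refine IsBigO.of_bound' ?_
  filter_upwards [h₁, h₂] with x hx₁ hx₂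
  simp only [Pi.sub_apply, Real.norm_eq_abs]
  refine (abs_le_max_abs_abs (sub_le_sub_right hx₁ (g x)) (sub_le_sub_right hx₂ (g x))).trans ?_
  exact (max_le_add_of_nonneg (abs_nonneg _) (abs_nonneg _)).trans (le_abs_self _)

theorem IsEquivalent.sum_range {u v : ℕ → ℝ} (huv : u ~[atTop] v) (hv : 0 ≤ v)
    (htop : Tendsto (fun n => ∑ i ∈ range n, v i) atTop atTop) :
    (fun n => ∑ i ∈ range n, u i) ~[atTop] fun n => ∑ i ∈ range n, v i := by
  simpa only [IsEquivalent, Pi.sub_def, ← sum_sub_distrib] using huv.isLittleO.sum_range hv htop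

end Asymptotics

theorem pow_succ_sub_pow_succ_mem_Icc {R : Type*} [CommRing R] [PartialOrder R] [IsOrderedRing R]
    {a b : R} (ha : 0 ≤ a) (hab : a ≤ b) (n : ℕ) :
    b ^ (n + 1) - a ^ (n + 1) ∈ Set.Icc ((n + 1) * a ^ n * (b - a)) ((n + 1) * b ^ n * (b - a)) := by
  have hb : 0 ≤ b := ha.trans hab
  have hterm : ∀ i ∈ range (n + 1), a ^ n ≤ b ^ i * a ^ (n - i) ∧ b ^ i * a ^ (n - i) ≤ b ^ n := by
    intro i hi
    have hi : i ≤ n := Nat.lt_succ_iff.mp (mem_range.mp hi)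
    constructor
    · calc a ^ n = a ^ i * a ^ (n - i) := by rw [← pow_add, Nat.add_sub_cancel' hi]
        _ ≤ b ^ i * a ^ (n - i) := by gcongr
    · calc b ^ i * a ^ (n - i) ≤ b ^ i * b ^ (n - i) := by gcongr
        _ = b ^ n := by rw [← pow_add, Nat.add_sub_cancel' hi]
  rw [← geom_sum₂_mul, Nat.add_sub_cancel]
  have hsum := card_nsmul_le_sum _ _ _ fun i hi => (hterm i hi).1
  have hsum' := sum_le_card_nsmul _ _ _ fun i hi => (hterm i hi).2
  simp only [card_range, nsmul_eq_mul, Nat.cast_add, Nat.cast_one] at hsum hsum'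
  have hba : 0 ≤ b - a := sub_nonneg.mpr hab
  exact ⟨mul_le_mul_of_nonneg_right hsum hba, mul_le_mul_of_nonneg_right hsum' hba⟩

theorem Real.log_add_one_sub_log_mem_Icc {x : ℝ} (hx : 0 < x) :
    log (x + 1) - log x ∈ Set.Icc (x + 1)⁻¹ x⁻¹ := by
  have hx₁ : 0 < (x + 1) / x := by positivity
  have hlo := one_sub_inv_le_log_of_pos hx₁
  have hhi := log_le_sub_one_of_pos hx₁
  rw [log_div (by positivity) hx.ne'] at hlo hhi
  rw [inv_div] at hlo
  refine ⟨le_of_eq_of_le ?_ hlo, le_of_le_of_eq hhi ?_⟩ <;> field_simp <;> ring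

theorem Real.isEquivalent_log_natCast_add_one :
    (fun n : ℕ => log (n + 1 : ℝ)) ~[atTop] fun n => log n := by
  have hlog : Tendsto (fun n : ℕ => ‖log (n : ℝ)‖) atTop atTop :=
    tendsto_norm_atTop_atTop.comp (tendsto_log_atTop.comp tendsto_natCast_atTop_atTop)
  exact ((isLittleO_one_iff ℝ).mpr tendsto_log_nat_add_one_sub_log).trans
    (isLittleO_const_left.mpr (Or.inr hlog))

theorem Real.log_pow_succ_sub_div_mem_Icc {x : ℝ} (hx : 1 ≤ x) (r : ℕ) :
    (log (x + 1) ^ (r + 1) - log x ^ (r + 1)) / (r + 1) ∈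
      Set.Icc (log x ^ r / (x + 1)) (log (x + 1) ^ r / x) := by
  have hx₀ : 0 < x := by linarith
  have hlog : log x ≤ log (x + 1) := log_le_log hx₀ (by linarith)
  have ha : 0 ≤ log x := log_nonneg hx
  obtain ⟨hlo, hhi⟩ := pow_succ_sub_pow_succ_mem_Icc ha hlog r
  obtain ⟨hlo', hhi'⟩ := log_add_one_sub_log_mem_Icc hx₀
  have hr : (0 : ℝ) < r + 1 := by positivity
  refine ⟨?_, ?_⟩
  · rw [le_div_iff₀ hr]
    calc log x ^ r / (x + 1) * (r + 1) = (r + 1) * log x ^ r * (x + 1)⁻¹ := by ring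
      _ ≤ (r + 1) * log x ^ r * (log (x + 1) - log x) :=
        mul_le_mul_of_nonneg_left hlo' (mul_nonneg hr.le (pow_nonneg ha r))
      _ ≤ _ := hlo
  · rw [div_le_iff₀ hr]
    calc _ ≤ (r + 1) * log (x + 1) ^ r * (log (x + 1) - log x) := hhi
      _ ≤ (r + 1) * log (x + 1) ^ r * x⁻¹ :=
        mul_le_mul_of_nonneg_left hhi' (mul_nonneg hr.le (pow_nonneg (ha.trans hlog) r))
      _ = log (x + 1) ^ r / x * (r + 1) := by ring

theorem Real.isEquivalent_log_pow_div_increment (r : ℕ) :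
    (fun k : ℕ => log k ^ r / k) ~[atTop]
      fun k => (log (k + 1 : ℝ) ^ (r + 1) - log k ^ (r + 1)) / (r + 1) := by
  have hsucc : (fun k : ℕ => (k + 1 : ℝ)) ~[atTop] fun k => (k : ℝ) :=
    IsEquivalent.refl.add_const_of_norm_tendsto_atTop
      (tendsto_norm_atTop_atTop.comp tendsto_natCast_atTop_atTop)
  have hlo : (fun k : ℕ => log k ^ r / (k + 1 : ℝ)) ~[atTop] fun k => log k ^ r / k :=
    IsEquivalent.refl.div hsucc
  have hhi : (fun k : ℕ => log (k + 1 : ℝ) ^ r / k) ~[atTop] fun k => log k ^ r / k :=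
    (isEquivalent_log_natCast_add_one.pow r).div IsEquivalent.refl
  refine (IsEquivalent.of_le_of_le hlo hhi ?_ ?_).symm <;>
    filter_upwards [eventually_ge_atTop 1] with k hk
  exacts [(log_pow_succ_sub_div_mem_Icc (Nat.one_le_cast.mpr hk) r).1,
    (log_pow_succ_sub_div_mem_Icc (Nat.one_le_cast.mpr hk) r).2]

theorem Real.sum_log_pow_div_isEquivalent (r : ℕ) :
    (fun n : ℕ => ∑ k ∈ Ioo 0 n, log k ^ r / k) ~[atTop] fun n => log n ^ (r + 1) / (r + 1) := by
  set v : ℕ → ℝ := fun k => (log (k + 1 : ℝ) ^ (r + 1) - log k ^ (r + 1)) / (r + 1)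
  have hv_sum : ∀ n, ∑ k ∈ range n, v k = log n ^ (r + 1) / (r + 1) := by
    intro n
    simp only [v, ← sum_div]
    have := sum_range_sub (fun k : ℕ => log k ^ (r + 1)) n
    push_cast at this
    simp [this]
  have hv : 0 ≤ v := fun k => by
    refine div_nonneg (sub_nonneg.mpr (pow_le_pow_left₀ (log_natCast_nonneg k) ?_ _)) (by positivity)
    rcases k.eq_zero_or_pos with rfl | hk
    · simp
    · exact log_le_log (by exact_mod_cast hk) (by linarith)
  have htop : Tendsto (fun n => ∑ k ∈ range n, v k) atTop atTop := by
    simp_rw [hv_sum]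
    exact ((tendsto_pow_atTop (Nat.succ_ne_zero r)).comp
      (tendsto_log_atTop.comp tendsto_natCast_atTop_atTop)).atTop_div_const (by positivity)
  have hIoo : ∀ n : ℕ, ∑ k ∈ Ioo 0 n, log k ^ r / (k : ℝ) = ∑ k ∈ range n, log k ^ r / (k : ℝ) :=
    fun n => sum_subset (fun k hk => mem_range.mpr (mem_Ioo.mp hk).2) fun k hk hk' => by
      obtain rfl : k = 0 := by simp_all
      simp
  simp_rw [hIoo, ← hv_sum]
  exact (isEquivalent_log_pow_div_increment r).sum_range hv htop

theorem Finset.sum_Ioo_zero_reflect {M : Type*} [AddCommMonoid M] (f : ℕ → M) (n : ℕ) :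
    ∑ k ∈ Ioo 0 n, f (n - k) = ∑ k ∈ Ioo 0 n, f k := by
  rw [← Ico_add_one_left_eq_Ioo, sum_Ico_reflect f _ (Nat.le_succ n)]
  simp

theorem Real.sum_Ioo_inv_natCast_sub (n : ℕ) :
    ∑ k ∈ Ioo 0 n, ((n : ℝ) - k)⁻¹ = ∑ k ∈ Ioo 0 n, (k : ℝ)⁻¹ := by
  rw [← sum_Ioo_zero_reflect (fun k => (k : ℝ)⁻¹)]
  exact sum_congr rfl fun k hk => by rw [Nat.cast_sub (mem_Ioo.mp hk).2.le]

theorem Real.sum_log_pow_div_sub_le (r n : ℕ) :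
    ∑ k ∈ Ioo 0 n, log k ^ r / ((n : ℝ) - k) ≤ log n ^ r * (1 + log n) := by
  calc ∑ k ∈ Ioo 0 n, log k ^ r / ((n : ℝ) - k)
      ≤ ∑ k ∈ Ioo 0 n, log n ^ r * ((n : ℝ) - k)⁻¹ := by
        refine sum_le_sum fun k hk => ?_
        obtain ⟨hk₀, hkn⟩ := mem_Ioo.mp hk
        have hkn' : (k : ℝ) < n := by exact_mod_cast hkn
        rw [← div_eq_mul_inv]
        gcongr
    _ = log n ^ r * ∑ k ∈ Ioo 0 n, (k : ℝ)⁻¹ := by rw [← mul_sum, sum_Ioo_inv_natCast_sub]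
    _ ≤ log n ^ r * harmonic n := by
        gcongr
        simp only [harmonic_eq_sum_Icc, Rat.cast_sum, Rat.cast_inv, Rat.cast_natCast]
        exact sum_le_sum_of_subset_of_nonneg (fun k hk => by simp at hk ⊢; omega)
          fun k _ _ => by positivity
    _ ≤ log n ^ r * (1 + log n) :=
        mul_le_mul_of_nonneg_left (harmonic_le_one_add_log n) (pow_nonneg (log_natCast_nonneg n) r)

theorem Real.log_sub_log_two_pow_le_sum (r : ℕ) {n : ℕ} (hn : 2 ≤ n) :
    (log n - log 2) ^ (r + 1) ≤ ∑ k ∈ Ioo 0 n, log k ^ r / ((n : ℝ) - k) := by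
  have hn₀ : (0 : ℝ) < n := by positivity
  have hhalf : log n - log 2 = log (n / 2) := (log_div hn₀.ne' two_ne_zero).symm
  have hhalf₀ : 0 ≤ log n - log 2 := by
    rw [hhalf]; exact log_nonneg (by rw [le_div_iff₀ two_pos]; exact_mod_cast hn)
  have hreflect : ∑ k ∈ Ioo 0 n, log k ^ r / ((n : ℝ) - k)
      = ∑ j ∈ Ioo 0 n, log ((n - j : ℕ) : ℝ) ^ r / j := by
    rw [← sum_Ioo_zero_reflect (fun j => log ((n - j : ℕ) : ℝ) ^ r / j)]
    refine sum_congr rfl fun k hk => ?_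
    rw [Nat.sub_sub_self (mem_Ioo.mp hk).2.le, Nat.cast_sub (mem_Ioo.mp hk).2.le]
  rw [hreflect]
  calc (log n - log 2) ^ (r + 1) = (log n - log 2) ^ r * (log n - log 2) := pow_succ _ _
    _ ≤ (log n - log 2) ^ r * harmonic (n / 2) := by
        refine mul_le_mul_of_nonneg_left ?_ (pow_nonneg hhalf₀ r)
        refine le_trans ?_ (log_add_one_le_harmonic (n / 2))
        rw [hhalf]
        refine log_le_log (by positivity) ?_
        rw [div_le_iff₀ two_pos]
        exact_mod_cast (by omega : n ≤ (n / 2 + 1) * 2)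
    _ = ∑ j ∈ Icc 1 (n / 2), (log n - log 2) ^ r / j := by
        simp only [harmonic_eq_sum_Icc, Rat.cast_sum, Rat.cast_inv, Rat.cast_natCast, mul_sum,
          div_eq_mul_inv]
    _ ≤ ∑ j ∈ Icc 1 (n / 2), log ((n - j : ℕ) : ℝ) ^ r / j := by
        refine sum_le_sum fun j hj => ?_
        obtain ⟨hj₁, hj₂⟩ := mem_Icc.mp hj
        gcongr
        rw [hhalf]
        refine log_le_log (by positivity) ?_
        rw [div_le_iff₀ two_pos]
        exact_mod_cast (by omega : n ≤ (n - j) * 2)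
    _ ≤ ∑ j ∈ Ioo 0 n, log ((n - j : ℕ) : ℝ) ^ r / j :=
        sum_le_sum_of_subset_of_nonneg (fun j hj => by simp at hj ⊢; omega)
          fun j _ _ => div_nonneg (pow_nonneg (log_natCast_nonneg _) r) (Nat.cast_nonneg j)

theorem Real.sum_log_pow_div_sub_isEquivalent (r : ℕ) :
    (fun n : ℕ => ∑ k ∈ Ioo 0 n, log k ^ r / ((n : ℝ) - k)) ~[atTop]
      fun n => log n ^ (r + 1) := by
  have hlog : Tendsto (fun n : ℕ => ‖log (n : ℝ)‖) atTop atTop :=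
    tendsto_norm_atTop_atTop.comp (tendsto_log_atTop.comp tendsto_natCast_atTop_atTop)
  have hlo : (fun n : ℕ => (log n - log 2) ^ (r + 1)) ~[atTop] fun n => log n ^ (r + 1) := by
    simpa only [← sub_eq_add_neg, Pi.pow_def] using
      (IsEquivalent.refl.add_const_of_norm_tendsto_atTop hlog (c := -log 2)).pow (r + 1)
  have hhi : (fun n : ℕ => log n ^ r * (1 + log n)) ~[atTop] fun n => log n ^ (r + 1) := by
    simpa only [pow_succ, Pi.mul_def] using
      IsEquivalent.refl.mul (IsEquivalent.refl.const_add_of_norm_tendsto_atTop hlog (c := (1 : ℝ)))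
  exact IsEquivalent.of_le_of_le hlo hhi
    (eventually_atTop.mpr ⟨2, fun n hn => log_sub_log_two_pow_le_sum r hn⟩)
    (Eventually.of_forall (sum_log_pow_div_sub_le r))

/-- For fixed `r`, `∑_{k=1}^{n-1} (ln k)^r/(k(n-k)) ~ ((r+2)/(r+1)) (ln n)^{r+1}/n`. -/
theorem sum_log_pow_asymptotic (r : ℕ) :
    (fun n : ℕ => ∑ k ∈ Finset.Ioo 0 n, (Real.log k) ^ r / ((k : ℝ) * ((n : ℝ) - (k : ℝ))))
      ~[atTop]
    (fun n : ℕ => ((r : ℝ) + 2) / ((r : ℝ) + 1) * (Real.log n) ^ (r + 1) / (n : ℝ)) := by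
  have hsplit : ∀ n : ℕ, ∑ k ∈ Ioo 0 n, log k ^ r / ((k : ℝ) * ((n : ℝ) - k))
      = (∑ k ∈ Ioo 0 n, log k ^ r / k + ∑ k ∈ Ioo 0 n, log k ^ r / ((n : ℝ) - k)) / n := by
    intro n
    rw [← sum_add_distrib, sum_div]
    refine sum_congr rfl fun k hk => ?_
    obtain ⟨hk₀, hkn⟩ := mem_Ioo.mp hk
    have hk₀' : (k : ℝ) ≠ 0 := by positivity
    have hkn' : (n : ℝ) - k ≠ 0 := sub_ne_zero.mpr (by exact_mod_cast hkn.ne')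
    have hn : (n : ℝ) ≠ 0 := Nat.cast_ne_zero.mpr (by omega)
    field_simp
    ring
  have hsum := (sum_log_pow_div_isEquivalent r).add_add_of_nonneg (fun n => by positivity)
    (fun n => by positivity) (sum_log_pow_div_sub_isEquivalent r)
  simp_rw [hsplit]
  refine (hsum.div (IsEquivalent.refl (u := fun n : ℕ => (n : ℝ)))).congr_right
    (Eventually.of_forall fun n => ?_)
  simp only [Pi.div_apply, Pi.add_apply]
  field_simp
  ring
end

section
/- Under the uniform measure on Dyck paths of length 2n, letting Z_n be the number of times t in {0,1,...,n} with x_{2t}=0 (including t=0), for each k ≥ 2 the probability that Z_n = k converges as n → ∞ to (k-1)·2^{-k}. -/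
open Filter Finset

namespace DyckAux

def wt (b : Bool) : ℤ := if b then 1 else -1

def sps (l : List Bool) : ℤ := (l.map wt).sum

lemma sps_nil : sps [] = 0 := rfl

lemma sps_cons (b : Bool) (l : List Bool) : sps (b :: l) = wt b + sps l := by
  simp [sps]

lemma sps_append (A B : List Bool) : sps (A ++ B) = sps A + sps B := by
  simp [sps]

def DyckL (l : List Bool) : Prop := sps l = 0 ∧ ∀ t, 0 ≤ sps (l.take t)

def zerosL (l : List Bool) : ℕ :=
  ((Finset.range (l.length + 1)).filter fun t => sps (l.take t) = 0).card

lemma sps_take_of_le (l : List Bool) {t : ℕ} (h : l.length ≤ t) :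
    sps (l.take t) = sps l := by
  rw [List.take_of_length_le h]

lemma sps_take_append_left (A B : List Bool) {t : ℕ} (h : t ≤ A.length) :
    sps ((A ++ B).take t) = sps (A.take t) := by
  rw [List.take_append, Nat.sub_eq_zero_of_le h, List.take_zero,
    List.append_nil]

lemma sps_take_append_right (A B : List Bool) (u : ℕ) :
    sps ((A ++ B).take (A.length + u)) = sps A + sps (B.take u) := by
  rw [List.take_append, List.take_of_length_le (Nat.le_add_right _ _),
    Nat.add_sub_cancel_left, sps_append]

lemma even_sps_add_len (l : List Bool) : Even (sps l + l.length) := by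
  induction l with
  | nil => simp [sps]
  | cons b l ih =>
    cases b with
    | false =>
      have h : sps (false :: l) + ((false :: l).length : ℤ) = sps l + l.length := by
        rw [sps_cons]; push_cast; simp [wt]; ring
      rw [h]; exact ih
    | true =>
      have h : sps (true :: l) + ((true :: l).length : ℤ) = (sps l + l.length) + 2 := by
        rw [sps_cons]; push_cast; simp [wt]; ring
      rw [h]; exact ih.add even_two

lemma even_len_of_sps_zero {l : List Bool} (h : sps l = 0) : Even l.length := by
  have := even_sps_add_len l
  rw [h, zero_add] at this
  exact_mod_cast this

lemma sps_take_succ (l : List Bool) {t : ℕ} (h : t < l.length) :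
    sps (l.take (t + 1)) = sps (l.take t) + wt l[t] := by
  have h2 : l.take (t + 1) = l.take t ++ [l[t]] := by
    rw [List.take_succ, List.getElem?_eq_getElem h]; rfl
  rw [h2, sps_append]
  simp [sps]

/-- Glue two Dyck paths into `U A D B`. -/
def glue (A B : List Bool) : List Bool := true :: (A ++ false :: B)

lemma glue_length (A B : List Bool) : (glue A B).length = A.length + B.length + 2 := by
  simp [glue]; ring

lemma sps_take_glue_mid (A B : List Bool) {u : ℕ} (h : u ≤ A.length) :
    sps ((glue A B).take (u + 1)) = 1 + sps (A.take u) := by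
  rw [glue, List.take_succ_cons, sps_cons, sps_take_append_left _ _ h]
  rfl

lemma sps_take_glue_right (A B : List Bool) (u : ℕ) (hA : sps A = 0) :
    sps ((glue A B).take (A.length + 2 + u)) = sps (B.take u) := by
  have h : A.length + 2 + u = (A.length + (1 + u)) + 1 := by ring
  rw [glue, h, List.take_succ_cons, sps_cons, sps_take_append_right, hA]
  have h2 : (false :: B).take (1 + u) = false :: B.take u := by
    rw [add_comm]; rfl
  rw [h2, sps_cons]
  simp [wt]

lemma glue_dyck {A B : List Bool} (hA : DyckL A) (hB : DyckL B) : DyckL (glue A B) := by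
  constructor
  · have : sps (glue A B) = sps ((glue A B).take (A.length + 2 + B.length)) := by
      rw [sps_take_of_le]
      rw [glue_length]; omega
    rw [this, sps_take_glue_right _ _ _ hA.1, sps_take_of_le _ le_rfl, hB.1]
  · intro t
    match t with
    | 0 => simp [sps_nil]
    | (u+1) =>
      rcases le_or_gt (u+1) (A.length + 1) with h | h
      · rw [sps_take_glue_mid _ _ (by omega)]
        have := hA.2 u
        omega
      · have h2 : u + 1 = A.length + 2 + (u - 1 - A.length) := by omega
        rw [h2, sps_take_glue_right _ _ _ hA.1]
        exact hB.2 _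

lemma zerosL_glue {A : List Bool} (B : List Bool) (hA : DyckL A) :
    zerosL (glue A B) = zerosL B + 1 := by
  rw [zerosL, glue_length]
  rw [show A.length + B.length + 2 + 1 = (A.length + 2) + (B.length + 1) by ring]
  rw [Finset.range_add, Finset.filter_union]
  rw [Finset.card_union_of_disjoint]
  · have hleft : (Finset.filter (fun t => sps ((glue A B).take t) = 0)
        (Finset.range (A.length + 2))) = {0} := by
      ext t
      simp only [Finset.mem_filter, Finset.mem_range, Finset.mem_singleton]
      constructor
      · rintro ⟨ht, hz⟩
        by_contra h0
        obtain ⟨u, rfl⟩ : ∃ u, t = u + 1 := ⟨t - 1, by omega⟩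
        rw [sps_take_glue_mid _ _ (by omega)] at hz
        have := hA.2 u
        omega
      · rintro rfl
        exact ⟨by omega, by simp [sps_nil]⟩
    have hright : (Finset.filter (fun t => sps ((glue A B).take t) = 0)
        ((Finset.range (B.length + 1)).map (addLeftEmbedding (A.length + 2)))).card
        = zerosL B := by
      rw [Finset.filter_map, Finset.card_map]
      simp only [zerosL]
      congr 1
      apply Finset.filter_congr
      intro u hu
      have h3 : (addLeftEmbedding (A.length + 2)) u = A.length + 2 + u := rfl
      simp only [Function.comp_apply, h3]
      rw [sps_take_glue_right _ _ _ hA.1]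
    rw [hleft, hright]
    simp [add_comm]
  · rw [Finset.disjoint_left]
    intro a ha hb
    simp only [Finset.mem_filter, Finset.mem_range] at ha
    simp only [Finset.mem_filter, Finset.mem_map, addLeftEmbedding_apply] at hb
    omega

lemma glue_inj {A B A' B' : List Bool} (hA : DyckL A) (hA' : DyckL A')
    (h : glue A B = glue A' B') : A = A' ∧ B = B' := by
  have hlen : A.length = A'.length := by
    by_contra hne
    rcases Nat.lt_or_ge A.length A'.length with hlt | hge
    · -- sps of take (A.length+2) is 0 on left, ≥ 1 on right
      have h1 : sps ((glue A B).take (A.length + 2 + 0)) = 0 := by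
        rw [sps_take_glue_right _ _ _ hA.1]; simp [sps_nil]
      have h2 : sps ((glue A' B').take ((A.length + 1) + 1)) = 1 + sps (A'.take (A.length + 1)) := by
        exact sps_take_glue_mid _ _ (by omega)
      rw [h] at h1
      have h3 : (A.length + 2 + 0) = (A.length + 1) + 1 := by ring
      rw [h3, h2] at h1
      have := hA'.2 (A.length + 1)
      omega
    · have hlt : A'.length < A.length := by omega
      have h1 : sps ((glue A' B').take (A'.length + 2 + 0)) = 0 := by
        rw [sps_take_glue_right _ _ _ hA'.1]; simp [sps_nil]
      have h2 : sps ((glue A B).take ((A'.length + 1) + 1)) = 1 + sps (A.take (A'.length + 1)) := by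
        exact sps_take_glue_mid _ _ (by omega)
      rw [← h] at h1
      have h3 : (A'.length + 2 + 0) = (A'.length + 1) + 1 := by ring
      rw [h3, h2] at h1
      have := hA.2 (A'.length + 1)
      omega
  rw [glue, glue, List.cons_eq_cons] at h
  have := List.append_inj h.2 hlen
  refine ⟨this.1, ?_⟩
  have := this.2
  rwa [List.cons_eq_cons, eq_self_iff_true, true_and] at this

lemma dyck_decomp {l : List Bool} (hl : DyckL l) (hne : l ≠ []) :
    ∃ A B, DyckL A ∧ DyckL B ∧ l = glue A B := by
  have hlpos : 0 < l.length := List.length_pos_iff.mpr hne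
  have hP : ∃ t, 1 ≤ t ∧ sps (l.take t) = 0 :=
    ⟨l.length, hlpos, by rw [List.take_length]; exact hl.1⟩
  classical
  obtain ⟨ht1, htz⟩ := Nat.find_spec hP
  have hmin : ∀ s, s < Nat.find hP → ¬(1 ≤ s ∧ sps (l.take s) = 0) :=
    fun s hs => Nat.find_min hP hs
  have ht₀le : Nat.find hP ≤ l.length :=
    Nat.find_le ⟨hlpos, by rw [List.take_length]; exact hl.1⟩
  generalize hgen : Nat.find hP = t₀ at ht1 htz hmin ht₀le
  clear hgen
  have hpos : ∀ u, 1 ≤ u → u < t₀ → 1 ≤ sps (l.take u) := by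
    intro u h1 h2
    have := hmin u h2
    have h0 := hl.2 u
    omega
  obtain ⟨b, l', rfl⟩ : ∃ b l', l = b :: l' := by
    cases l with
    | nil => exact absurd rfl hne
    | cons b l' => exact ⟨b, l', rfl⟩
  have hlen' : t₀ ≤ l'.length + 1 := by simpa using ht₀le
  have hb : b = true := by
    have h1 := hl.2 1
    have h2 : sps ((b :: l').take 1) = wt b := by simp [sps]
    rw [h2] at h1
    cases b
    · simp [wt] at h1
    · rfl
  subst hb
  have ht2 : 2 ≤ t₀ := by
    by_contra hc
    have h1 : t₀ = 1 := by omega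
    rw [h1] at htz
    have h2 : sps ((true :: l').take 1) = 1 := by simp [sps, wt]
    omega
  have hstep : sps ((true :: l').take t₀) =
      sps ((true :: l').take (t₀ - 1)) + wt ((true :: l')[t₀ - 1]'(by simp; omega)) := by
    have := sps_take_succ (true :: l') (t := t₀ - 1) (by simp; omega)
    rwa [show t₀ - 1 + 1 = t₀ by omega] at this
  have hprev : sps ((true :: l').take (t₀ - 1)) = 1 := by
    have h1 := hpos (t₀ - 1) (by omega) (by omega)
    have h2 : wt ((true :: l')[t₀ - 1]'(by simp; omega)) = 1 ∨
        wt ((true :: l')[t₀ - 1]'(by simp; omega)) = -1 := by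
      cases ((true :: l')[t₀ - 1]'(by simp; omega)) <;> simp [wt]
    omega
  have hfalse : (true :: l')[t₀ - 1]'(by simp; omega) = false := by
    by_contra hc
    have h3 : (true :: l')[t₀ - 1]'(by simp; omega) = true := by simpa using hc
    rw [h3] at hstep
    simp [wt] at hstep
    omega
  set A := l'.take (t₀ - 2) with hA
  set B := l'.drop (t₀ - 1) with hB
  have hAlen : A.length = t₀ - 2 := by
    rw [hA, List.length_take]; omega
  have hglue : true :: l' = glue A B := by
    rw [glue]
    congr 1
    conv_lhs => rw [← List.take_append_drop (t₀ - 2) l']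
    congr 1
    have hdrop : l'.drop (t₀ - 2) = l'[t₀ - 2]'(by omega) :: l'.drop (t₀ - 2 + 1) := by
      rw [List.drop_eq_getElem_cons (by omega)]
    have hd2 : l'.drop (t₀ - 2 + 1) = B := by rw [hB]; congr 1; omega
    rw [hdrop, hd2]
    congr 1
    have h5 : (true :: l')[(t₀ - 2) + 1]'(by simp; omega) = l'[t₀ - 2]'(by omega) :=
      List.getElem_cons_succ ..
    rw [← h5]
    convert hfalse using 2
    omega
  have hsA : sps A = 0 := by
    have h6 : sps ((true :: l').take ((t₀ - 2) + 1)) = 1 + sps (A.take (t₀ - 2)) := by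
      rw [hglue]; exact sps_take_glue_mid _ _ (by omega)
    rw [show (t₀ - 2) + 1 = t₀ - 1 by omega, hprev] at h6
    rw [← hAlen, List.take_length] at h6
    omega
  have hDA : DyckL A := by
    refine ⟨hsA, fun u => ?_⟩
    rcases le_or_gt A.length u with h | h
    · rw [sps_take_of_le _ h, hsA]
    · have h6 : sps ((true :: l').take (u + 1)) = 1 + sps (A.take u) := by
        rw [hglue]; exact sps_take_glue_mid _ _ (le_of_lt h)
      have h7 := hpos (u + 1) (by omega) (by omega)
      omega
  have hBfull : sps B = 0 := by
    have h6 : sps ((true :: l').take (A.length + 2 + B.length)) = sps (B.take B.length) := by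
      rw [hglue]; exact sps_take_glue_right _ _ _ hsA
    rw [List.take_length] at h6
    rw [sps_take_of_le, hl.1] at h6
    · omega
    · rw [hB, List.length_drop]; simp; omega
  have hDB : DyckL B := by
    refine ⟨hBfull, fun u => ?_⟩
    have h6 : sps ((true :: l').take (A.length + 2 + u)) = sps (B.take u) := by
      rw [hglue]; exact sps_take_glue_right _ _ _ hsA
    have h7 := hl.2 (A.length + 2 + u)
    omega
  exact ⟨A, B, hDA, hDB, hglue⟩

instance listSubtypeFinite (m : ℕ) (P : List Bool → Prop) :
    Finite {l : List Bool // l.length = m ∧ P l} := by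
  have hinj : Function.Injective (fun l : {l : List Bool // l.length = m ∧ P l} =>
      (fun i : Fin m => l.1.get (Fin.cast l.2.1.symm i))) := by
    rintro ⟨l, hl, hPl⟩ ⟨l', hl', hPl'⟩ h
    apply Subtype.ext
    show l = l'
    apply List.ext_get (by rw [hl, hl'])
    intro i h1 h2
    have := congrFun h ⟨i, by omega⟩
    simpa using this
  exact Finite.of_injective _ hinj

/-- transfer between step functions and lists -/
def funListEquiv (m : ℕ) (P : List Bool → Prop) :
    {s : Fin m → Bool // P (List.ofFn s)} ≃ {l : List Bool // l.length = m ∧ P l} where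
  toFun s := ⟨List.ofFn s.1, by simp, by simpa using s.2⟩
  invFun l := ⟨fun i => l.1.get (Fin.cast l.2.1.symm i), by
    have : List.ofFn (fun i : Fin m => l.1.get (Fin.cast l.2.1.symm i)) = l.1 := by
      apply List.ext_get (by simp [l.2.1])
      intro i h1 h2
      simp
    rw [this]; exact l.2.2⟩
  left_inv s := by
    ext i
    simp
  right_inv l := by
    ext1
    apply List.ext_get (by simp [l.2.1])
    intro i h1 h2
    simp

/-- The first-return decomposition equivalence. -/
noncomputable def glueEquiv (n : ℕ) (Q Q' : List Bool → Prop)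
    (hQ : ∀ A B, DyckL A → DyckL B → (Q (glue A B) ↔ Q' B)) :
    (Σ m : Fin (n + 1), {A : List Bool // A.length = 2 * (m : ℕ) ∧ DyckL A} ×
      {B : List Bool // B.length = 2 * (n - (m : ℕ)) ∧ DyckL B ∧ Q' B}) ≃
    {l : List Bool // l.length = 2 * (n + 1) ∧ DyckL l ∧ Q l} := by
  apply Equiv.ofBijective (f := fun x =>
    ⟨glue x.2.1.1 x.2.2.1, by
      rw [glue_length, x.2.1.2.1, x.2.2.2.1]
      have := x.1.2
      omega, glue_dyck x.2.1.2.2 x.2.2.2.2.1,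
      (hQ _ _ x.2.1.2.2 x.2.2.2.2.1).mpr x.2.2.2.2.2⟩)
  constructor
  · rintro ⟨m, ⟨A, hA⟩, ⟨B, hB⟩⟩ ⟨m', ⟨A', hA'⟩, ⟨B', hB'⟩⟩ h
    simp only [Subtype.mk.injEq] at h
    obtain ⟨rfl, rfl⟩ := glue_inj hA.2 hA'.2 h
    have : m = m' := by
      have := hA.1
      have := hA'.1
      ext
      omega
    subst this
    rfl
  · rintro ⟨l, hlen, hD, hQl⟩
    have hne : l ≠ [] := by
      intro h
      rw [h] at hlen
      simp at hlen
    obtain ⟨A, B, hDA, hDB, rfl⟩ := dyck_decomp hD hne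
    obtain ⟨mA, hmA⟩ := even_len_of_sps_zero hDA.1
    rw [glue_length] at hlen
    refine ⟨⟨⟨mA, by omega⟩, ⟨A, by simp only [Fin.val_mk]; omega, hDA⟩,
      ⟨B, by simp only [Fin.val_mk]; omega, hDB, (hQ _ _ hDA hDB).mp hQl⟩⟩, rfl⟩

/-- counting by first return -/
lemma card_glue_rec (n : ℕ) (Q Q' : List Bool → Prop)
    (hQ : ∀ A B, DyckL A → DyckL B → (Q (glue A B) ↔ Q' B)) :
    Nat.card {l : List Bool // l.length = 2 * (n + 1) ∧ DyckL l ∧ Q l} =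
      ∑ m ∈ Finset.range (n + 1),
        Nat.card {A : List Bool // A.length = 2 * m ∧ DyckL A} *
        Nat.card {B : List Bool // B.length = 2 * (n - m) ∧ DyckL B ∧ Q' B} := by
  rw [← Nat.card_congr (glueEquiv n Q Q' hQ)]
  letI : ∀ m : Fin (n + 1), Fintype {A : List Bool // A.length = 2 * (m : ℕ) ∧ DyckL A} :=
    fun m => Fintype.ofFinite _
  letI : ∀ m : Fin (n + 1), Fintype {B : List Bool // B.length = 2 * (n - (m : ℕ)) ∧ DyckL B ∧ Q' B} :=
    fun m => Fintype.ofFinite _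
  rw [Nat.card_eq_fintype_card, Fintype.card_sigma]
  rw [← Fin.sum_univ_eq_sum_range (fun m => Nat.card {A : List Bool // A.length = 2 * m ∧ DyckL A} *
        Nat.card {B : List Bool // B.length = 2 * (n - m) ∧ DyckL B ∧ Q' B})]
  congr 1
  ext m
  rw [Fintype.card_prod]
  congr 1 <;> rw [Nat.card_eq_fintype_card]

lemma dyck_nil : DyckL [] := ⟨rfl, fun t => by simp [sps]⟩

lemma zerosL_nil : zerosL [] = 1 := by
  simp [zerosL, sps]

noncomputable def Dck (n : ℕ) : ℕ :=
  Nat.card {l : List Bool // l.length = 2 * n ∧ DyckL l}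

noncomputable def Dz (n k : ℕ) : ℕ :=
  Nat.card {l : List Bool // l.length = 2 * n ∧ DyckL l ∧ zerosL l = k}

lemma card_len_zero (P : List Bool → Prop) (h : P []) :
    Nat.card {l : List Bool // l.length = 2 * 0 ∧ P l} = 1 := by
  haveI : Unique {l : List Bool // l.length = 2 * 0 ∧ P l} :=
    { default := ⟨[], by simp, h⟩
      uniq := by
        rintro ⟨l, hl, hP⟩
        apply Subtype.ext
        show l = []
        simpa using List.length_eq_zero_iff.mp (by simpa using hl) }
  exact Nat.card_unique

lemma card_len_zero_none (P : List Bool → Prop) (h : ¬ P []) :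
    Nat.card {l : List Bool // l.length = 2 * 0 ∧ P l} = 0 := by
  haveI : IsEmpty {l : List Bool // l.length = 2 * 0 ∧ P l} := by
    constructor
    rintro ⟨l, hl, hP⟩
    have : l = [] := List.length_eq_zero_iff.mp (by simpa using hl)
    rw [this] at hP
    exact h hP
  exact Nat.card_of_isEmpty

lemma Dck_zero : Dck 0 = 1 := card_len_zero _ dyck_nil

lemma Dz_zero (k : ℕ) : Dz 0 k = if k = 1 then 1 else 0 := by
  rcases eq_or_ne k 1 with rfl | hk
  · rw [if_pos rfl]
    exact card_len_zero _ ⟨dyck_nil, zerosL_nil⟩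
  · rw [if_neg hk]
    apply card_len_zero_none
    rintro ⟨-, h⟩
    rw [zerosL_nil] at h
    exact hk h.symm

lemma zerosL_ge_two {l : List Bool} (hD : DyckL l) (hne : l ≠ []) : 2 ≤ zerosL l := by
  have hlpos : 0 < l.length := List.length_pos_iff.mpr hne
  have hsub : ({0, l.length} : Finset ℕ) ⊆
      (Finset.range (l.length + 1)).filter fun t => sps (l.take t) = 0 := by
    intro t ht
    simp only [Finset.mem_insert, Finset.mem_singleton] at ht
    rcases ht with rfl | rfl
    · simp [sps]
    · simp only [Finset.mem_filter, Finset.mem_range]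
      exact ⟨by omega, by rw [List.take_length]; exact hD.1⟩
  have := Finset.card_le_card hsub
  rwa [Finset.card_pair (by omega)] at this

lemma Dz_one (n : ℕ) (hn : 1 ≤ n) : Dz n 1 = 0 := by
  rw [Dz]
  haveI : IsEmpty {l : List Bool // l.length = 2 * n ∧ DyckL l ∧ zerosL l = 1} := by
    constructor
    rintro ⟨l, hl, hD, hz⟩
    have hne : l ≠ [] := by
      intro h; rw [h] at hl; simp at hl; omega
    have := zerosL_ge_two hD hne
    omega
  exact Nat.card_of_isEmpty

lemma Dck_succ (n : ℕ) : Dck (n + 1) = ∑ m ∈ Finset.range (n + 1), Dck m * Dck (n - m) := by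
  have h := card_glue_rec n (fun _ => True) (fun _ => True) (by intros; simp)
  rw [Dck]
  have e1 : ∀ m : ℕ, Nat.card {l : List Bool // l.length = 2 * m ∧ DyckL l ∧ True}
      = Dck m := by
    intro m
    rw [Dck]
    exact Nat.card_congr (Equiv.subtypeEquivRight (by simp))
  calc Nat.card {l : List Bool // l.length = 2 * (n + 1) ∧ DyckL l}
      = Nat.card {l : List Bool // l.length = 2 * (n + 1) ∧ DyckL l ∧ True} :=
        (Nat.card_congr (Equiv.subtypeEquivRight (by simp))).symm
    _ = _ := by
        rw [h]
        apply Finset.sum_congr rfl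
        intro m _
        rw [e1 (n - m)]
        rfl

lemma Dck_eq_catalan (n : ℕ) : Dck n = catalan n := by
  induction n using Nat.strong_induction_on with
  | _ n ih =>
    match n with
    | 0 => rw [Dck_zero, catalan_zero]
    | (n + 1) =>
      rw [Dck_succ, catalan_succ]
      rw [← Fin.sum_univ_eq_sum_range (fun m => Dck m * Dck (n - m))]
      apply Finset.sum_congr rfl
      intro m _
      rw [ih m (by omega), ih (n - (m : ℕ)) (by omega)]

lemma Dz_succ (n k : ℕ) :
    Dz (n + 1) (k + 1) = ∑ m ∈ Finset.range (n + 1), catalan m * Dz (n - m) k := by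
  have h := card_glue_rec n (fun l => zerosL l = k + 1) (fun B => zerosL B = k) (by
    intro A B hA hB
    rw [zerosL_glue B hA]
    omega)
  rw [Dz, h]
  apply Finset.sum_congr rfl
  intro m _
  congr 1
  rw [show Nat.card {A : List Bool // A.length = 2 * m ∧ DyckL A} = Dck m from rfl,
    Dck_eq_catalan]

/-- ballot-type numbers -/
def J (r m : ℕ) : ℤ :=
  (Nat.choose (2 * m + r) m : ℤ) - (Nat.choose (2 * m + r) (m + r + 1) : ℤ)

lemma J_zero_right (r : ℕ) : J r 0 = 1 := by
  rw [J]
  rw [Nat.choose_eq_zero_of_lt (show 2 * 0 + r < 0 + r + 1 by omega)]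
  simp

lemma catalan_cast (j : ℕ) : (catalan j : ℤ) = J 0 j := by
  have h1 : (j + 1) * catalan j = Nat.choose (2 * j) j := by
    rw [succ_mul_catalan_eq_centralBinom, Nat.centralBinom]
  have h2 : Nat.choose (2 * j) (j + 1) * (j + 1) = Nat.choose (2 * j) j * j := by
    have := Nat.choose_succ_right_eq (2 * j) j
    rwa [show 2 * j - j = j by omega] at this
  have hj : ((j : ℤ) + 1) ≠ 0 := by positivity
  apply mul_left_cancel₀ hj
  rw [J]
  rw [show j + 0 + 1 = j + 1 by omega, show 2 * j + 0 = 2 * j by omega]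
  have h1' : ((j : ℤ) + 1) * (catalan j : ℤ) = (Nat.choose (2 * j) j : ℤ) := by
    exact_mod_cast h1
  have h2' : (Nat.choose (2 * j) (j + 1) : ℤ) * ((j : ℤ) + 1)
      = (Nat.choose (2 * j) j : ℤ) * j := by exact_mod_cast h2
  rw [h1']
  ring_nf
  ring_nf at h2'
  linarith

lemma catalan_succ_cast (m : ℕ) : (catalan (m + 1) : ℤ) = J 1 m := by
  have h0 := catalan_cast (m + 1)
  rw [J, show 2 * (m + 1) + 0 = 2 * m + 2 by ring, show m + 1 + 0 + 1 = m + 2 by ring] at h0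
  have p1 := Nat.choose_succ_succ (2 * m + 1) m
  have p2 := Nat.choose_succ_succ (2 * m + 1) (m + 1)
  rw [J]
  rw [show 2 * m + 2 = (2 * m + 1) + 1 from rfl] at h0
  have p1' : (Nat.choose (2 * m + 1 + 1) (m + 1) : ℤ)
      = Nat.choose (2 * m + 1) m + Nat.choose (2 * m + 1) (m + 1) := by exact_mod_cast p1
  have p2' : (Nat.choose (2 * m + 1 + 1) (m + 2) : ℤ)
      = Nat.choose (2 * m + 1) (m + 1) + Nat.choose (2 * m + 1) (m + 2) := by exact_mod_cast p2
  rw [p1', p2'] at h0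
  rw [show m + 1 + 1 = m + 2 by ring] at h0
  rw [h0]
  ring

lemma J_rec (r m : ℕ) : J (r + 1) (m + 1) = J r (m + 1) + J (r + 2) m := by
  have p1 := Nat.choose_succ_succ (2 * m + r + 2) m
  have p2 := Nat.choose_succ_succ (2 * m + r + 2) (m + r + 2)
  simp only [J]
  rw [show 2 * (m + 1) + (r + 1) = (2 * m + r + 2) + 1 by ring,
    show m + 1 + (r + 1) + 1 = (m + r + 2) + 1 by ring,
    show 2 * (m + 1) + r = (2 * m + r + 1) + 1 by ring,
    show m + 1 + r + 1 = (m + r + 1) + 1 by ring,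
    show 2 * m + (r + 2) = 2 * m + r + 2 by ring,
    show m + (r + 2) + 1 = (m + r + 2) + 1 by ring]
  have p1' : (Nat.choose (2 * m + r + 2 + 1) (m + 1) : ℤ)
      = Nat.choose (2 * m + r + 2) m + Nat.choose (2 * m + r + 2) (m + 1) := by
    exact_mod_cast p1
  have p2' : (Nat.choose (2 * m + r + 2 + 1) (m + r + 2 + 1) : ℤ)
      = Nat.choose (2 * m + r + 2) (m + r + 2) + Nat.choose (2 * m + r + 2) (m + r + 3) := by
    exact_mod_cast p2
  rw [p1', p2']
  rw [show 2 * m + r + 1 + 1 = 2 * m + r + 2 by ring,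
    show m + r + 1 + 1 = m + r + 2 by ring,
    show m + r + 2 + 1 = m + r + 3 by ring]
  ring

lemma J_conv (m : ℕ) : ∀ r : ℕ,
    ∑ a ∈ Finset.range (m + 1), (catalan a : ℤ) * J r (m - a) = J (r + 1) m := by
  induction m using Nat.strong_induction_on with
  | _ m ihm =>
    match m with
    | 0 =>
      intro r
      simp [J_zero_right]
    | (M + 1) =>
      intro r
      induction r with
      | zero =>
        -- catalan convolution
        have hc : ∑ a ∈ Finset.range (M + 1 + 1), (catalan a : ℤ) * J 0 (M + 1 - a)
            = ((catalan (M + 2) : ℕ) : ℤ) := by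
          rw [catalan_succ (M + 1)]
          push_cast
          rw [← Fin.sum_univ_eq_sum_range (fun a => (catalan a : ℤ) * J 0 (M + 1 - a))]
          apply Finset.sum_congr rfl
          intro a _
          rw [← catalan_cast]
        rw [hc, show M + 2 = (M + 1) + 1 from rfl, catalan_succ_cast]
      | succ r ihr =>
        rw [Finset.sum_range_succ]
        have hsplit : ∀ a ∈ Finset.range (M + 1),
            (catalan a : ℤ) * J (r + 1) (M + 1 - a)
            = (catalan a : ℤ) * J r (M + 1 - a) + (catalan a : ℤ) * J (r + 2) (M - a) := by
          intro a ha
          simp only [Finset.mem_range] at ha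
          rw [show M + 1 - a = (M - a) + 1 by omega, J_rec, mul_add]
        rw [Finset.sum_congr rfl hsplit, Finset.sum_add_distrib]
        have h1 : ∑ a ∈ Finset.range (M + 1), (catalan a : ℤ) * J r (M + 1 - a)
            = J (r + 1) (M + 1) - (catalan (M + 1) : ℤ) * J r 0 := by
          have h2 := ihr
          rw [Finset.sum_range_succ, Nat.sub_self] at h2
          linarith
        rw [Nat.sub_self, J_zero_right, h1, ihm M (by omega) (r + 2), J_zero_right]
        have h3 : J (r + 1 + 1) (M + 1) = J (r + 1) (M + 1) + J (r + 3) M := J_rec (r + 1) M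
        rw [show r + 2 + 1 = r + 3 from rfl, h3]
        ring

lemma Dz_closed : ∀ r : ℕ, (∀ n : ℕ, n ≤ r → Dz n (r + 2) = 0) ∧
    (∀ n : ℕ, r + 1 ≤ n → (Dz n (r + 2) : ℤ) = J r (n - r - 1)) := by
  intro r
  induction r with
  | zero =>
    refine ⟨?_, ?_⟩
    · intro n hn
      interval_cases n
      rw [Dz_zero]
      norm_num
    · intro n hn
      obtain ⟨j, rfl⟩ : ∃ j, n = j + 1 := ⟨n - 1, by omega⟩
      have h := Dz_succ j 1
      have hsum : ∑ m ∈ Finset.range (j + 1), catalan m * Dz (j - m) 1 = catalan j := by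
        rw [Finset.sum_eq_single j]
        · rw [Nat.sub_self, Dz_zero]; norm_num
        · intro m hm hne
          simp only [Finset.mem_range] at hm
          rw [Dz_one (j - m) (by omega), mul_zero]
        · intro h2; exact absurd (Finset.self_mem_range_succ j) h2
      rw [show (0:ℕ)+2 = 1+1 from rfl, h, hsum, show j + 1 - 0 - 1 = j by omega, ← catalan_cast]
  | succ r ih =>
    refine ⟨?_, ?_⟩
    · intro n hn
      match n, hn with
      | 0, _ => rw [Dz_zero, if_neg (by omega)]
      | (j+1), hn =>
        rw [show r + 1 + 2 = (r + 2) + 1 from rfl, Dz_succ]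
        apply Finset.sum_eq_zero
        intro m hm
        rw [ih.1 (j - m) (by omega), mul_zero]
    · intro n hn
      obtain ⟨j, rfl⟩ : ∃ j, n = j + 1 := ⟨n - 1, by omega⟩
      have hj : r + 1 ≤ j := by omega
      rw [show r + 1 + 2 = (r + 2) + 1 from rfl, Dz_succ]
      push_cast
      set M := j - r - 1 with hM
      have hsub : Finset.range (M + 1) ⊆ Finset.range (j + 1) := by
        apply Finset.range_subset_range.mpr; omega
      have hzero : ∀ m ∈ Finset.range (j + 1), m ∉ Finset.range (M + 1) →
          ((catalan m : ℤ) * (Dz (j - m) (r + 2) : ℤ)) = 0 := by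
        intro m hm hnm
        simp only [Finset.mem_range] at hm hnm
        rw [ih.1 (j - m) (by omega)]
        push_cast
        ring
      rw [← Finset.sum_subset hsub hzero]
      have hcong : ∀ m ∈ Finset.range (M + 1),
          (catalan m : ℤ) * (Dz (j - m) (r + 2) : ℤ) = (catalan m : ℤ) * J r (M - m) := by
        intro m hm
        simp only [Finset.mem_range] at hm
        rw [ih.2 (j - m) (by omega), show j - m - r - 1 = M - m by omega]
      rw [Finset.sum_congr rfl hcong, J_conv M r]

lemma catalan_pos' (n : ℕ) : 0 < catalan n := by
  have h1 := succ_mul_catalan_eq_centralBinom n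
  have h2 := Nat.centralBinom_pos n
  by_contra hc
  push_neg at hc
  interval_cases (catalan n)
  omega

lemma I1 (r m : ℕ) : ((m : ℤ) + r + 1) * J r m
    = ((r : ℤ) + 1) * (Nat.choose (2 * m + r) m : ℤ) := by
  have hsym : Nat.choose (2 * m + r) m = Nat.choose (2 * m + r) (m + r) := by
    rw [show 2 * m + r = m + (m + r) by ring]
    exact Nat.choose_symm_add
  have h2 := Nat.choose_succ_right_eq (2 * m + r) (m + r)
  rw [show 2 * m + r - (m + r) = m by omega, ← hsym] at h2
  have h2' : (Nat.choose (2 * m + r) (m + r + 1) : ℤ) * ((m : ℤ) + r + 1)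
      = (Nat.choose (2 * m + r) m : ℤ) * m := by exact_mod_cast h2
  rw [J]
  linarith [h2']

lemma I2 (r m : ℕ) : ∀ j : ℕ,
    (Nat.choose (2 * m + r + j) (m + j) : ℤ) * ∏ i ∈ Finset.range j, ((m : ℤ) + i + 1)
    = (Nat.choose (2 * m + r) m : ℤ) * ∏ i ∈ Finset.range j, (2 * (m : ℤ) + r + i + 1) := by
  intro j
  induction j with
  | zero => simp
  | succ j ih =>
    have h := Nat.add_one_mul_choose_eq (2 * m + r + j) (m + j)
    have h' : (Nat.choose (2 * m + r + j + 1) (m + j + 1) : ℤ) * ((m : ℤ) + j + 1)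
        = (2 * (m : ℤ) + r + j + 1) * (Nat.choose (2 * m + r + j) (m + j) : ℤ) := by
      exact_mod_cast h.symm
    rw [Finset.prod_range_succ, Finset.prod_range_succ]
    rw [show 2 * m + r + (j + 1) = (2 * m + r + j) + 1 by ring,
      show m + (j + 1) = (m + j) + 1 by ring]
    linear_combination (∏ i ∈ Finset.range j, ((m : ℤ) + i + 1)) * h'
      + (2 * (m : ℤ) + r + j + 1) * ih

lemma I3 (r m : ℕ) : (Nat.choose (2 * m + 2 * r + 2) (m + r + 1) : ℤ)
    = 2 * (Nat.choose (2 * m + 2 * r + 1) (m + r + 1) : ℤ) := by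
  have h := Nat.choose_mul_succ_eq (2 * m + 2 * r + 1) (m + r + 1)
  rw [show 2 * m + 2 * r + 1 + 1 = 2 * m + 2 * r + 2 by ring,
    show 2 * m + 2 * r + 2 - (m + r + 1) = m + r + 1 by omega] at h
  have h' : (Nat.choose (2 * m + 2 * r + 1) (m + r + 1) : ℤ) * (2 * (m : ℤ) + 2 * r + 2)
      = (Nat.choose (2 * m + 2 * r + 2) (m + r + 1) : ℤ) * ((m : ℤ) + r + 1) := by
    exact_mod_cast h
  have hne : ((m : ℤ) + r + 1) ≠ 0 := by positivity
  apply mul_right_cancel₀ hne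
  linarith [h']

noncomputable def F (r m : ℕ) : ℝ := ((J r m : ℤ) : ℝ) / (catalan (m + r + 1) : ℝ)

lemma F_eq (r m : ℕ) : F r m
    = ((r : ℝ) + 1) * (((m : ℝ) + ((r : ℝ) + 2)) / ((m : ℝ) + ((r : ℝ) + 1))) * (1 / 2) *
      ∏ i ∈ Finset.range (r + 1),
        (((m : ℝ) + ((i : ℝ) + 1)) / (2 * (m : ℝ) + ((r : ℝ) + (i : ℝ) + 1))) := by
  have hcat : (0 : ℝ) < (catalan (m + r + 1) : ℝ) := by exact_mod_cast catalan_pos' (m + r + 1)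
  have hchm : (0 : ℝ) < (Nat.choose (2 * m + r) m : ℝ) := by
    exact_mod_cast Nat.choose_pos (by omega)
  have hQpos : (0 : ℝ) < ∏ i ∈ Finset.range (r + 1), (2 * (m : ℝ) + ((r : ℝ) + (i : ℝ) + 1)) := by
    apply Finset.prod_pos
    intro i _
    positivity
  have hPpos : (0 : ℝ) < ∏ i ∈ Finset.range (r + 1), ((m : ℝ) + ((i : ℝ) + 1)) := by
    apply Finset.prod_pos
    intro i _
    positivity
  -- the three key identities, cast to ℝ
  have e1 : ((m : ℝ) + r + 1) * ((J r m : ℤ) : ℝ)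
      = ((r : ℝ) + 1) * (Nat.choose (2 * m + r) m : ℝ) := by exact_mod_cast I1 r m
  have e2 : ((m : ℝ) + r + 2) * (catalan (m + r + 1) : ℝ)
      = (Nat.choose (2 * (m + r + 1)) (m + r + 1) : ℝ) := by
    have := succ_mul_catalan_eq_centralBinom (m + r + 1)
    have h' : ((m + r + 1 + 1 : ℕ) : ℝ) * (catalan (m + r + 1) : ℝ)
        = (Nat.centralBinom (m + r + 1) : ℝ) := by exact_mod_cast this
    rw [Nat.centralBinom] at h'
    push_cast at h' ⊢
    linarith [h']
  have e3 : (Nat.choose (2 * (m + r + 1)) (m + r + 1) : ℝ) *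
        ∏ i ∈ Finset.range (r + 1), ((m : ℝ) + ((i : ℝ) + 1))
      = 2 * (Nat.choose (2 * m + r) m : ℝ) *
        ∏ i ∈ Finset.range (r + 1), (2 * (m : ℝ) + ((r : ℝ) + (i : ℝ) + 1)) := by
    have hi2 := I2 r m (r + 1)
    have hi3 := I3 r m
    rw [show 2 * m + r + (r + 1) = 2 * m + 2 * r + 1 by ring,
      show m + (r + 1) = m + r + 1 by ring] at hi2
    have hi2' : (Nat.choose (2 * m + 2 * r + 1) (m + r + 1) : ℝ) *
          ∏ i ∈ Finset.range (r + 1), ((m : ℝ) + ((i : ℝ) + 1))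
        = (Nat.choose (2 * m + r) m : ℝ) *
          ∏ i ∈ Finset.range (r + 1), (2 * (m : ℝ) + ((r : ℝ) + (i : ℝ) + 1)) := by
      have := congrArg (fun z : ℤ => (z : ℝ)) hi2
      push_cast at this ⊢
      convert this using 3 <;> push_cast <;> ring
    have hi3' : (Nat.choose (2 * (m + r + 1)) (m + r + 1) : ℝ)
        = 2 * (Nat.choose (2 * m + 2 * r + 1) (m + r + 1) : ℝ) := by
      rw [show 2 * (m + r + 1) = 2 * m + 2 * r + 2 by ring]
      exact_mod_cast hi3
    rw [hi3']
    linarith [hi2']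
  set P := ∏ i ∈ Finset.range (r + 1), ((m : ℝ) + ((i : ℝ) + 1)) with hP
  set Q := ∏ i ∈ Finset.range (r + 1), (2 * (m : ℝ) + ((r : ℝ) + (i : ℝ) + 1)) with hQ
  have key : ((J r m : ℤ) : ℝ) * (((m : ℝ) + (r : ℝ) + 1) * 2 * Q)
      = ((r : ℝ) + 1) * ((m : ℝ) + (r : ℝ) + 2) * P * (catalan (m + r + 1) : ℝ) := by
    linear_combination (2 * Q) * e1 - (((r : ℝ) + 1) * P) * e2 - ((r : ℝ) + 1) * e3
  have hne : (((m : ℝ) + (r : ℝ) + 1) * 2 * Q) ≠ 0 := by positivity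
  rw [F, div_eq_iff (ne_of_gt hcat), Finset.prod_div_distrib]
  rw [show (((r : ℝ) + 1) * (((m : ℝ) + ((r : ℝ) + 2)) / ((m : ℝ) + ((r : ℝ) + 1))) * (1 / 2) *
      (P / Q)) * (catalan (m + r + 1) : ℝ)
      = (((r : ℝ) + 1) * ((m : ℝ) + (r : ℝ) + 2) * P * (catalan (m + r + 1) : ℝ)) /
        (((m : ℝ) + (r : ℝ) + 1) * 2 * Q) by
    rw [eq_div_iff hne]
    field_simp
    ring]
  rw [eq_div_iff hne]
  linear_combination key

lemma frac_tendsto (a b c : ℝ) (hb : 0 < b) (hc : 0 < c) :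
    Tendsto (fun m : ℕ => ((m : ℝ) + a) / (c * (m : ℝ) + b)) atTop (nhds (1 / c)) := by
  have h1 : Tendsto (fun m : ℕ => (1 + a / (m : ℝ)) / (c + b / (m : ℝ))) atTop
      (nhds ((1 + 0) / (c + 0))) := by
    apply Tendsto.div
    · exact tendsto_const_nhds.add (tendsto_const_div_atTop_nhds_zero_nat a)
    · exact tendsto_const_nhds.add (tendsto_const_div_atTop_nhds_zero_nat b)
    · norm_num; positivity
  have h2 : (1 + 0) / (c + 0) = 1 / c := by norm_num
  rw [h2] at h1
  apply Tendsto.congr' _ h1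
  filter_upwards [eventually_ge_atTop 1] with m hm
  have hm' : (0 : ℝ) < (m : ℝ) := by exact_mod_cast hm
  have hd : c * (m : ℝ) + b ≠ 0 := by positivity
  field_simp

lemma frac1_tendsto (a b : ℝ) (hb : 0 < b) :
    Tendsto (fun m : ℕ => ((m : ℝ) + a) / ((m : ℝ) + b)) atTop (nhds 1) := by
  have := frac_tendsto a b 1 hb one_pos
  simp only [one_mul] at this
  norm_num at this
  exact this


lemma F_tendsto (r : ℕ) : Tendsto (F r) atTop (nhds (((r : ℝ) + 1) / 2 ^ (r + 2))) := by
  have hprod : Tendsto (fun m : ℕ => ∏ i ∈ Finset.range (r + 1),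
      (((m : ℝ) + ((i : ℝ) + 1)) / (2 * (m : ℝ) + ((r : ℝ) + (i : ℝ) + 1)))) atTop
      (nhds (∏ _i ∈ Finset.range (r + 1), (1 / 2 : ℝ))) := by
    apply tendsto_finset_prod
    intro i _
    exact frac_tendsto ((i : ℝ) + 1) ((r : ℝ) + (i : ℝ) + 1) 2 (by positivity) two_pos
  have hfrac : Tendsto (fun m : ℕ => ((m : ℝ) + ((r : ℝ) + 2)) / ((m : ℝ) + ((r : ℝ) + 1)))
      atTop (nhds 1) := frac1_tendsto _ _ (by positivity)
  have h := (((tendsto_const_nhds (x := ((r : ℝ) + 1)) (f := atTop (α := ℕ))).mul hfrac).mul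
    (tendsto_const_nhds (x := (1 / 2 : ℝ)))).mul hprod
  have hval : (((r : ℝ) + 1) * 1 * (1 / 2)) * ∏ _i ∈ Finset.range (r + 1), (1 / 2 : ℝ)
      = ((r : ℝ) + 1) / 2 ^ (r + 2) := by
    rw [Finset.prod_const, Finset.card_range, mul_one]
    rw [show ((1:ℝ)/2)^(r+1) = 1/2^(r+1) from by rw [div_pow, one_pow]]
    rw [show ((2:ℝ)^(r+2)) = 2^(r+1) * 2 from pow_succ 2 (r+1)]
    field_simp
  rw [hval] at h
  apply Tendsto.congr _ h
  intro m
  rw [F_eq]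

end DyckAux

/-- Position at time `t` of the ±1-step path with step sequence `s`. -/
def walkPos (n : ℕ) (s : Fin (2 * n) → Bool) (t : ℕ) : ℤ :=
  ∑ i : Fin (2 * n), if (i : ℕ) < t then (if s i then 1 else -1) else 0

/-- `s` encodes a Dyck path of length `2n`. -/
def IsDyckPath (n : ℕ) (s : Fin (2 * n) → Bool) : Prop :=
  walkPos n s (2 * n) = 0 ∧ ∀ t ≤ 2 * n, 0 ≤ walkPos n s t

/-- The number of `t ∈ {0,…,n}` with `x_{2t} = 0` (counting `t = 0`). -/
def numZeros (n : ℕ) (s : Fin (2 * n) → Bool) : ℕ :=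
  ((Finset.range (n + 1)).filter fun t => walkPos n s (2 * t) = 0).card

namespace DyckAux

lemma walkPos_eq (n : ℕ) (s : Fin (2 * n) → Bool) (t : ℕ) :
    walkPos n s t = sps ((List.ofFn s).take t) := by
  have h1 : sps ((List.ofFn s).take t)
      = ∑ j ∈ Finset.univ.filter (fun j : Fin (2 * n) => (j : ℕ) < t), wt (s j) := by
    rw [sps, List.map_take, List.map_ofFn, List.sum_take_ofFn]
    rfl
  rw [h1, walkPos, Finset.sum_filter]
  apply Finset.sum_congr rfl
  intro i _
  by_cases h : (i : ℕ) < t <;> simp [h, wt]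

lemma isDyck_iff (n : ℕ) (s : Fin (2 * n) → Bool) :
    IsDyckPath n s ↔ DyckL (List.ofFn s) := by
  have hlen : (List.ofFn s).length = 2 * n := by simp
  have htake : (List.ofFn s).take (2 * n) = List.ofFn s :=
    List.take_of_length_le (by rw [hlen])
  constructor
  · rintro ⟨h1, h2⟩
    constructor
    · rw [walkPos_eq, htake] at h1
      exact h1
    · intro t
      rcases le_or_gt t (2 * n) with h | h
      · have := h2 t h
        rwa [walkPos_eq] at this
      · rw [sps_take_of_le _ (by omega)]
        have := h2 (2 * n) le_rfl
        rw [walkPos_eq, htake] at this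
        exact this
  · rintro ⟨h1, h2⟩
    constructor
    · rw [walkPos_eq, htake]
      exact h1
    · intro t _
      rw [walkPos_eq]
      exact h2 t

lemma numZeros_eq (n : ℕ) (s : Fin (2 * n) → Bool) :
    numZeros n s = zerosL (List.ofFn s) := by
  have hlen : (List.ofFn s).length = 2 * n := by simp
  rw [numZeros, zerosL, hlen]
  apply Finset.card_bij (fun t _ => 2 * t)
  · intro t ht
    simp only [Finset.mem_filter, Finset.mem_range] at ht ⊢
    refine ⟨by omega, ?_⟩
    rw [← walkPos_eq]
    exact ht.2
  · intro t1 h1 t2 h2 h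
    omega
  · intro t' ht'
    simp only [Finset.mem_filter, Finset.mem_range] at ht'
    have heven : Even t' := by
      have h0 := even_sps_add_len ((List.ofFn s).take t')
      rw [ht'.2, zero_add, List.length_take, hlen] at h0
      have : min t' (2 * n) = t' := by omega
      rw [this] at h0
      exact_mod_cast h0
    obtain ⟨u, hu⟩ := heven
    refine ⟨u, ?_, by omega⟩
    simp only [Finset.mem_filter, Finset.mem_range]
    refine ⟨by omega, ?_⟩
    rw [walkPos_eq, show 2 * u = t' by omega]
    exact ht'.2

end DyckAux

/-- Under uniform Dyck paths, `P(Zₙ = k) → (k-1)·2^{-k}` for every `k ≥ 2`. -/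
theorem dyck_numZeros_limit (k : ℕ) (hk : 2 ≤ k) :
    Filter.Tendsto
      (fun n : ℕ =>
        (Set.ncard {s : Fin (2 * n) → Bool | IsDyckPath n s ∧ numZeros n s = k} : ℝ)
          / (catalan n : ℝ))
      Filter.atTop (nhds (((k : ℝ) - 1) / 2 ^ k)) := by
  obtain ⟨r, rfl⟩ : ∃ r, k = r + 2 := ⟨k - 2, by omega⟩
  have hcard : ∀ n : ℕ,
      Set.ncard {s : Fin (2 * n) → Bool | IsDyckPath n s ∧ numZeros n s = r + 2}
        = DyckAux.Dz n (r + 2) := by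
    intro n
    rw [← Nat.card_coe_set_eq, DyckAux.Dz]
    apply Nat.card_congr
    exact (Equiv.subtypeEquivRight (fun s => by
        simp only [Set.mem_setOf_eq]
        rw [DyckAux.isDyck_iff, DyckAux.numZeros_eq])).trans
      (DyckAux.funListEquiv (2 * n) (fun l => DyckAux.DyckL l ∧ DyckAux.zerosL l = r + 2))
  have hlim : (((r + 2 : ℕ) : ℝ) - 1) / 2 ^ (r + 2) = ((r : ℝ) + 1) / 2 ^ (r + 2) := by
    push_cast
    ring
  rw [hlim]
  have hF := (DyckAux.F_tendsto r).comp (tendsto_sub_atTop_nat (r + 1))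
  apply Tendsto.congr' _ hF
  filter_upwards [eventually_ge_atTop (r + 1)] with n hn
  show DyckAux.F r (n - (r + 1)) = _
  rw [hcard n, DyckAux.F]
  have h1 : (DyckAux.Dz n (r + 2) : ℤ) = DyckAux.J r (n - (r + 1)) := by
    have := (DyckAux.Dz_closed r).2 n hn
    rwa [show n - r - 1 = n - (r + 1) by omega] at this
  have h2 : n - (r + 1) + r + 1 = n := by omega
  rw [h2, ← h1]
  push_cast
  ring
end

section
/- For x ∈ (0,1), the function y ↦ ((1+y/2)ln(1+y/2) - (y/2)ln(y/2)) - ((x+y)ln(x+y) - x ln x - y ln y), defined on (0,∞), has a unique minimizer at y = x²/(2-2x), and its minimum value equals -( (2-x)ln 2 + (1-x)ln(1-x) - (2-x)ln(2-x) ). -/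
/-!
The derivative of `y ↦ 𝒰^SRWB(y) - U(x, y)` is `½ log (y (2 + y) / (x + y)²)`, and
`y (2 + y) - (x + y)² = (2 - 2x) y - x²`, so the derivative is negative before
`y₀ = x² / (2 - 2x)` and positive after it. At `y₀` the arguments of the logarithms factor as
`1 + y₀/2 = (2 - x)² / 4(1 - x)`, `y₀/2 = x² / 4(1 - x)` and `x + y₀ = x (2 - x) / 2(1 - x)`,
which gives the minimum value.
-/

open Real Set

/-- The paper's `U(a, b)`. -/
noncomputable def mixEntropy (a b : ℝ) : ℝ := (a + b) * log (a + b) - a * log a - b * log b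

/-- The paper's `𝒰^SRWB(y)`. -/
noncomputable def srwbEntropy (y : ℝ) : ℝ := (1 + y / 2) * log (1 + y / 2) - (y / 2) * log (y / 2)

noncomputable def srwbGap (x y : ℝ) : ℝ := srwbEntropy y - mixEntropy x y

theorem hasDerivAt_mixEntropy_right {a b : ℝ} (hb : b ≠ 0) (hab : a + b ≠ 0) :
    HasDerivAt (mixEntropy a) (log (a + b) - log b) b := by
  have h := (((hasDerivAt_mul_log hab).comp b ((hasDerivAt_id b).const_add a)).sub_const
    (a * log a)).sub (hasDerivAt_mul_log hb)
  exact h.congr_deriv (by ring)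

theorem hasDerivAt_srwbEntropy {y : ℝ} (hy : y ≠ 0) (hy' : 1 + y / 2 ≠ 0) :
    HasDerivAt srwbEntropy ((log (1 + y / 2) - log (y / 2)) / 2) y := by
  have hdiv := (hasDerivAt_id y).div_const 2
  have h := ((hasDerivAt_mul_log hy').comp y (hdiv.const_add 1)).sub
    ((hasDerivAt_mul_log (div_ne_zero hy two_ne_zero)).comp y hdiv)
  exact h.congr_deriv (by ring)

theorem hasDerivAt_srwbGap {x y : ℝ} (hy : 0 < y) (hxy : 0 < x + y) :
    HasDerivAt (srwbGap x) (log (y * (2 + y) / (x + y) ^ 2) / 2) y := by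
  have h := (hasDerivAt_srwbEntropy hy.ne' (by linarith)).sub
    (hasDerivAt_mixEntropy_right hy.ne' hxy.ne')
  refine h.congr_deriv ?_
  rw [show 1 + y / 2 = (2 + y) / 2 by ring, log_div (by positivity) two_ne_zero,
    log_div hy.ne' two_ne_zero, log_div (by positivity) (by positivity),
    log_mul hy.ne' (by positivity), log_pow]
  push_cast
  ring

theorem mul_two_add_lt_sq_iff {x y : ℝ} (hx : x < 1) :
    y * (2 + y) < (x + y) ^ 2 ↔ y < x ^ 2 / (2 - 2 * x) := by
  have hdiff : y * (2 + y) - (x + y) ^ 2 = y * (2 - 2 * x) - x ^ 2 := by ring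
  rw [lt_div_iff₀ (by linarith)]
  constructor <;> intro h <;> linarith

theorem sq_lt_mul_two_add_iff {x y : ℝ} (hx : x < 1) :
    (x + y) ^ 2 < y * (2 + y) ↔ x ^ 2 / (2 - 2 * x) < y := by
  have hdiff : y * (2 + y) - (x + y) ^ 2 = y * (2 - 2 * x) - x ^ 2 := by ring
  rw [div_lt_iff₀ (by linarith)]
  constructor <;> intro h <;> linarith

theorem apply_lt_of_hasDerivAt_neg_of_pos {f f' : ℝ → ℝ} {a c y : ℝ}
    (hf : ∀ z, a < z → HasDerivAt f (f' z) z)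
    (hneg : ∀ z, a < z → z < c → f' z < 0) (hpos : ∀ z, c < z → 0 < f' z)
    (hc : a < c) (hy : a < y) (hyc : y ≠ c) : f c < f y := by
  have hcont : ∀ s, ∀ z, a < z → ContinuousWithinAt f s z := fun s z hz =>
    (hf z hz).continuousAt.continuousWithinAt
  rcases hyc.lt_or_gt with hlt | hgt
  · refine strictAntiOn_of_hasDerivWithinAt_neg (convex_Icc y c) (f' := f')
      (fun z hz => hcont _ z (hy.trans_le hz.1)) (fun z hz => ?_) (fun z hz => ?_)
      ⟨le_rfl, hlt.le⟩ ⟨hlt.le, le_rfl⟩ hlt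
    all_goals rw [interior_Icc] at hz
    · exact (hf z (hy.trans hz.1)).hasDerivWithinAt
    · exact hneg z (hy.trans hz.1) hz.2
  · refine strictMonoOn_of_hasDerivWithinAt_pos (convex_Icc c y) (f' := f')
      (fun z hz => hcont _ z (hc.trans_le hz.1)) (fun z hz => ?_) (fun z hz => ?_)
      ⟨le_rfl, hgt.le⟩ ⟨hgt.le, le_rfl⟩ hgt
    all_goals rw [interior_Icc] at hz
    · exact (hf z (hc.trans hz.1)).hasDerivWithinAt
    · exact hpos z hz.1

theorem srwbGap_min_lt {x y : ℝ} (hx0 : 0 < x) (hx1 : x < 1) (hy : 0 < y)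
    (hne : y ≠ x ^ 2 / (2 - 2 * x)) : srwbGap x (x ^ 2 / (2 - 2 * x)) < srwbGap x y := by
  have h2x : 0 < 2 - 2 * x := by linarith
  refine apply_lt_of_hasDerivAt_neg_of_pos
    (fun z hz => hasDerivAt_srwbGap hz (by linarith)) (fun z hz hzc => ?_) (fun z hz => ?_)
    (by positivity) hy hne
  · have hratio : z * (2 + z) / (x + z) ^ 2 < 1 :=
      (div_lt_one (by positivity)).2 ((mul_two_add_lt_sq_iff hx1).2 hzc)
    exact div_neg_of_neg_of_pos (log_neg (by positivity) hratio) two_pos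
  · have hz0 : 0 < z := (by positivity : (0 : ℝ) < x ^ 2 / (2 - 2 * x)).trans hz
    have hratio : 1 < z * (2 + z) / (x + z) ^ 2 :=
      (one_lt_div (by positivity)).2 ((sq_lt_mul_two_add_iff hx1).2 hz)
    exact div_pos (log_pos hratio) two_pos

theorem srwbGap_min_value {x : ℝ} (hx0 : 0 < x) (hx1 : x < 1) :
    srwbGap x (x ^ 2 / (2 - 2 * x))
      = -((2 - x) * log 2 + (1 - x) * log (1 - x) - (2 - x) * log (2 - x)) := by
  have h1x : 0 < 1 - x := by linarith
  have h2x : 0 < 2 - x := by linarith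
  have e1 : 1 + x ^ 2 / (2 - 2 * x) / 2 = (2 - x) ^ 2 / (2 ^ 2 * (1 - x)) := by
    field_simp; ring
  have e2 : x ^ 2 / (2 - 2 * x) / 2 = x ^ 2 / (2 ^ 2 * (1 - x)) := by
    field_simp
  have e3 : x + x ^ 2 / (2 - 2 * x) = x * (2 - x) / (2 * (1 - x)) := by
    field_simp; ring
  have e4 : x ^ 2 / (2 - 2 * x) = x ^ 2 / (2 * (1 - x)) := by ring
  unfold srwbGap srwbEntropy mixEntropy
  rw [e1, e2, e3, e4]
  simp (disch := positivity) only [log_div, log_mul, log_pow]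
  field_simp
  ring

/-- For `x ∈ (0,1)`, `y ↦ 𝒰^SRWB(y) - U(x,y)` on `(0,∞)` has unique minimizer
`y = x²/(2-2x)` with minimum value `-I^SRWB(x)`. -/
theorem VSRWB_unique_min (x : ℝ) (hx : x ∈ Set.Ioo (0 : ℝ) 1) :
    (∀ y ∈ Set.Ioi (0 : ℝ), y ≠ x ^ 2 / (2 - 2 * x) →
      (((1 + (x ^ 2 / (2 - 2 * x)) / 2) * log (1 + (x ^ 2 / (2 - 2 * x)) / 2)
          - ((x ^ 2 / (2 - 2 * x)) / 2) * log ((x ^ 2 / (2 - 2 * x)) / 2))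
        - ((x + x ^ 2 / (2 - 2 * x)) * log (x + x ^ 2 / (2 - 2 * x)) - x * log x
          - (x ^ 2 / (2 - 2 * x)) * log (x ^ 2 / (2 - 2 * x))))
      < (((1 + y / 2) * log (1 + y / 2) - (y / 2) * log (y / 2))
        - ((x + y) * log (x + y) - x * log x - y * log y))) ∧
    (((1 + (x ^ 2 / (2 - 2 * x)) / 2) * log (1 + (x ^ 2 / (2 - 2 * x)) / 2)
        - ((x ^ 2 / (2 - 2 * x)) / 2) * log ((x ^ 2 / (2 - 2 * x)) / 2))
      - ((x + x ^ 2 / (2 - 2 * x)) * log (x + x ^ 2 / (2 - 2 * x)) - x * log x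
        - (x ^ 2 / (2 - 2 * x)) * log (x ^ 2 / (2 - 2 * x))))
      = -((2 - x) * log 2 + (1 - x) * log (1 - x) - (2 - x) * log (2 - x)) :=
  ⟨fun _ hy hne => srwbGap_min_lt hx.1 hx.2 hy hne, srwbGap_min_value hx.1 hx.2⟩
end

section
/- For x ∈ (0,1), the function y ↦ ((2+y)ln(2+y) - (1+y)ln(1+y) - 2 ln 2) - ((x+y)ln(x+y) - x ln x - y ln y), defined on (0,∞), has a unique minimizer at y = x/(1-x), and its minimum value equals -( 2 ln 2 + (1-x)ln(1-x) - (2-x)ln(2-x) ). -/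
/-!
On `(0, ∞)` the derivative of `y ↦ 𝒰^Dyck(y) - U(x,y)` is `log ((2 + y) y / ((1 + y)(x + y)))`,
and `(2 + y) y - (1 + y)(x + y) = (1 - x) y - x`. So the function strictly decreases up to
`x / (1 - x)` and strictly increases after it; at that point every argument of a logarithm is a
quotient of `x`, `1 - x`, `2 - x`, and the value simplifies to the stated closed form.
-/

open Real

noncomputable section

namespace Dyck

/-- The paper's `U(x,y)`. -/
def U (x y : ℝ) : ℝ := (x + y) * log (x + y) - x * log x - y * log y

/-- The paper's `𝒰^Dyck(y)`. -/
def UDyck (y : ℝ) : ℝ := (2 + y) * log (2 + y) - (1 + y) * log (1 + y) - 2 * log 2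

def V (x y : ℝ) : ℝ := UDyck y - U x y

lemma hasDerivAt_add_mul_log (c y : ℝ) (h : c + y ≠ 0) :
    HasDerivAt (fun t => (c + t) * log (c + t)) (log (c + y) + 1) y :=
  ((hasDerivAt_mul_log h).comp y ((hasDerivAt_id y).const_add c)).congr_deriv (mul_one _)

lemma hasDerivAt_V {x y : ℝ} (hx : 0 ≤ x) (hy : 0 < y) :
    HasDerivAt (V x) (log ((2 + y) * y) - log ((1 + y) * (x + y))) y := by
  have d2 := hasDerivAt_add_mul_log 2 y (by linarith)
  have d1 := hasDerivAt_add_mul_log 1 y (by linarith)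
  have dx := hasDerivAt_add_mul_log x y (by linarith)
  have dy := hasDerivAt_mul_log hy.ne'
  refine (((d2.sub d1).sub_const _).sub ((dx.sub_const _).sub dy)).congr_deriv ?_
  rw [log_mul (by linarith) hy.ne', log_mul (by linarith) (by linarith)]
  ring

lemma deriv_V_neg {x y : ℝ} (hx : 0 ≤ x) (hy : 0 < y) (h : (1 - x) * y < x) :
    deriv (V x) y < 0 := by
  rw [(hasDerivAt_V hx hy).deriv, sub_neg]
  exact log_lt_log (by positivity) (by nlinarith)

lemma deriv_V_pos {x y : ℝ} (hx : 0 ≤ x) (hy : 0 < y) (h : x < (1 - x) * y) :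
    0 < deriv (V x) y := by
  rw [(hasDerivAt_V hx hy).deriv, sub_pos]
  exact log_lt_log (by positivity) (by nlinarith)

lemma continuousOn_V {x : ℝ} (hx : 0 ≤ x) : ContinuousOn (V x) (Set.Ioi 0) :=
  fun _ hy => (hasDerivAt_V hx hy).continuousAt.continuousWithinAt

variable {x : ℝ} (hx₀ : 0 < x) (hx₁ : x < 1)
include hx₀ hx₁

lemma strictAntiOn_V : StrictAntiOn (V x) (Set.Ioc 0 (x / (1 - x))) := by
  refine strictAntiOn_of_deriv_neg (convex_Ioc _ _)
    ((continuousOn_V hx₀.le).mono Set.Ioc_subset_Ioi_self) fun y hy => ?_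
  rw [interior_Ioc] at hy
  exact deriv_V_neg hx₀.le hy.1 ((lt_div_iff₀' (by linarith)).1 hy.2)

lemma strictMonoOn_V : StrictMonoOn (V x) (Set.Ici (x / (1 - x))) := by
  have hy₀ : 0 < x / (1 - x) := div_pos hx₀ (by linarith)
  refine strictMonoOn_of_deriv_pos (convex_Ici _)
    ((continuousOn_V hx₀.le).mono fun y hy => hy₀.trans_le hy) fun y hy => ?_
  rw [interior_Ici] at hy
  exact deriv_V_pos hx₀.le (hy₀.trans hy) ((div_lt_iff₀' (by linarith)).1 hy)

lemma V_min_lt {y : ℝ} (hy : 0 < y) (hne : y ≠ x / (1 - x)) : V x (x / (1 - x)) < V x y := by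
  have hy₀ : 0 < x / (1 - x) := div_pos hx₀ (by linarith)
  rcases hne.lt_or_gt with h | h
  · exact strictAntiOn_V hx₀ hx₁ ⟨hy, h.le⟩ ⟨hy₀, le_rfl⟩ h
  · exact strictMonoOn_V hx₀ hx₁ Set.self_mem_Ici h.le h

lemma V_min_eq :
    V x (x / (1 - x)) = -(2 * log 2 + (1 - x) * log (1 - x) - (2 - x) * log (2 - x)) := by
  have h1x : 1 - x ≠ 0 := by linarith
  have h2x : 2 - x ≠ 0 := by linarith
  have l2 : log (2 + x / (1 - x)) = log (2 - x) - log (1 - x) := by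
    rw [← log_div h2x h1x]; congr 1; field_simp; ring
  have l1 : log (1 + x / (1 - x)) = -log (1 - x) := by
    rw [← log_inv]; congr 1; field_simp; ring
  have lx : log (x + x / (1 - x)) = log x + log (2 - x) - log (1 - x) := by
    rw [← log_mul hx₀.ne' h2x, ← log_div (mul_ne_zero hx₀.ne' h2x) h1x]; congr 1; field_simp; ring
  have ly : log (x / (1 - x)) = log x - log (1 - x) := log_div hx₀.ne' h1x
  simp only [V, UDyck, U, l2, l1, lx, ly]
  field_simp
  ring

end Dyck

end

/-- For `x ∈ (0,1)`, `y ↦ 𝒰^Dyck(y) - U(x,y)` on `(0,∞)` has unique minimizer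
`y = x/(1-x)` with minimum value `-I^Dyck(x)`. -/
theorem VDyck_unique_min (x : ℝ) (hx : x ∈ Set.Ioo (0 : ℝ) 1) :
    (∀ y ∈ Set.Ioi (0 : ℝ), y ≠ x / (1 - x) →
      (((2 + x / (1 - x)) * log (2 + x / (1 - x)) - (1 + x / (1 - x)) * log (1 + x / (1 - x))
          - 2 * log 2)
        - ((x + x / (1 - x)) * log (x + x / (1 - x)) - x * log x
          - (x / (1 - x)) * log (x / (1 - x))))
      < (((2 + y) * log (2 + y) - (1 + y) * log (1 + y) - 2 * log 2)
        - ((x + y) * log (x + y) - x * log x - y * log y))) ∧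
    (((2 + x / (1 - x)) * log (2 + x / (1 - x)) - (1 + x / (1 - x)) * log (1 + x / (1 - x))
        - 2 * log 2)
      - ((x + x / (1 - x)) * log (x + x / (1 - x)) - x * log x
        - (x / (1 - x)) * log (x / (1 - x))))
      = -(2 * log 2 + (1 - x) * log (1 - x) - (2 - x) * log (2 - x)) :=
  ⟨fun _ hy hne => Dyck.V_min_lt hx.1 hx.2 hy hne, Dyck.V_min_eq hx.1 hx.2⟩
end

section
/- For each fixed y > 0, the function x ↦ (x+y)ln(x+y) - x ln x - y ln y - ((2-x)ln 2 + (1-x)ln(1-x) - (2-x)ln(2-x)) on (0,1) is strictly concave, attains its maximum at x = sqrt(y(y+2)) - y, and the maximum value equals (1+y/2)ln(1+y/2) - (y/2)ln(y/2). -/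
/-!
The derivative `log (x + y) - log x + log 2 + log (1 - x) - log (2 - x)` is a sum of the
logarithms of `1 + y / x` and `2 (1 - x) / (2 - x)`, both strictly decreasing on `(0, 1)`, so the
function is strictly concave. The derivative vanishes where `2 (x + y) (1 - x) = x (2 - x)`, i.e.
`x² + 2xy = 2y`, whose root in `(0, 1)` is `x = s - y` with `s = √(y (y + 2))`; a strictly concave
function has its strict maximum at a critical point. At `x = s - y` the numbers `x`, `1 - x`,
`2 - x` are `2y / (s + y)`, `2y / (s + y)²`, `2s / (s + y)`, which turns the value into the
closed form.
-/

open Real Set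

theorem StrictConcaveOn.lt_of_hasDerivAt_eq_zero {S : Set ℝ} {f : ℝ → ℝ} {a x : ℝ}
    (hf : StrictConcaveOn ℝ S f) (ha : a ∈ S) (hx : x ∈ S) (hxa : x ≠ a)
    (hf' : HasDerivAt f 0 a) : f x < f a := by
  rcases hxa.lt_or_gt with hlt | hgt
  · exact (slope_pos_iff_of_le hlt.le).1 (hf.lt_slope_of_hasDerivAt hx ha hlt hf')
  · exact (slope_neg_iff_of_le hgt.le).1 (hf.slope_lt_of_hasDerivAt ha hx hgt hf')

theorem log_sub_log_lt_log_sub_log {a b c d : ℝ} (ha : 0 < a) (hb : 0 < b) (hc : 0 < c)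
    (hd : 0 < d) (h : a * d < c * b) : log a - log b < log c - log d := by
  rw [← log_div ha.ne' hb.ne', ← log_div hc.ne' hd.ne']
  exact log_lt_log (div_pos ha hb) ((div_lt_div_iff₀ hb hd).2 h)

/-- The paper's `U(x, y) - I^SRWB(x)`. -/
noncomputable def wSRWB (y x : ℝ) : ℝ :=
  (x + y) * log (x + y) - x * log x - y * log y
    - ((2 - x) * log 2 + (1 - x) * log (1 - x) - (2 - x) * log (2 - x))

theorem hasDerivAt_wSRWB {x y : ℝ} (hx : x ≠ 0) (hxy : x + y ≠ 0) (hx1 : 1 - x ≠ 0)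
    (hx2 : 2 - x ≠ 0) :
    HasDerivAt (wSRWB y) (log (x + y) - log x + log 2 + log (1 - x) - log (2 - x)) x := by
  have hid := hasDerivAt_id x
  have h₁ := (hasDerivAt_mul_log hxy).comp x (hid.add_const y)
  have h₂ := hasDerivAt_mul_log hx
  have h₃ := (hid.const_sub 2).mul_const (log 2)
  have h₄ := (hasDerivAt_mul_log hx1).comp x (hid.const_sub 1)
  have h₅ := (hasDerivAt_mul_log hx2).comp x (hid.const_sub 2)
  exact (((h₁.sub h₂).sub_const (y * log y)).sub ((h₃.add h₄).sub h₅)).congr_deriv (by ring)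

theorem strictAntiOn_deriv_wSRWB {y : ℝ} (hy : 0 < y) :
    StrictAntiOn (fun x => log (x + y) - log x + log 2 + log (1 - x) - log (2 - x))
      (Ioo 0 1) := by
  rintro u ⟨hu0, hu1⟩ v ⟨hv0, hv1⟩ huv
  have hy_term : log (v + y) - log v < log (u + y) - log u :=
    log_sub_log_lt_log_sub_log (by linarith) hv0 (by linarith) hu0 (by nlinarith)
  have h_term : log (1 - v) - log (2 - v) < log (1 - u) - log (2 - u) :=
    log_sub_log_lt_log_sub_log (by linarith) (by linarith) (by linarith) (by linarith)
      (by nlinarith)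
  linarith

theorem strictConcaveOn_wSRWB {y : ℝ} (hy : 0 < y) : StrictConcaveOn ℝ (Ioo 0 1) (wSRWB y) := by
  have hderiv : ∀ x ∈ Ioo (0 : ℝ) 1,
      HasDerivAt (wSRWB y) (log (x + y) - log x + log 2 + log (1 - x) - log (2 - x)) x :=
    fun x ⟨hx0, hx1⟩ ↦ hasDerivAt_wSRWB hx0.ne' (by linarith) (by linarith) (by linarith)
  refine StrictAntiOn.strictConcaveOn_of_deriv (convex_Ioo 0 1)
    (fun x hx ↦ (hderiv x hx).continuousAt.continuousWithinAt) ?_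
  rw [interior_Ioo]
  exact (strictAntiOn_deriv_wSRWB hy).congr fun x hx ↦ (hderiv x hx).deriv.symm

section CriticalPoint

variable {y s : ℝ} (hy : 0 < y) (hs : 0 < s) (hs2 : s ^ 2 = y * (y + 2))
include hy hs hs2

theorem sub_mem_Ioo_of_sq_eq : s - y ∈ Ioo (0 : ℝ) 1 := by
  constructor <;> nlinarith

theorem hasDerivAt_wSRWB_sub_eq_zero : HasDerivAt (wSRWB y) 0 (s - y) := by
  obtain ⟨ha0, ha1⟩ := sub_mem_Ioo_of_sq_eq hy hs hs2
  convert hasDerivAt_wSRWB (y := y) ha0.ne' (by linarith) (by linarith) (by linarith) using 1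
  have hcrit : 2 * ((s - y + y) * (1 - (s - y))) = (s - y) * (2 - (s - y)) := by
    linear_combination -hs2
  have := congrArg log hcrit
  rw [log_mul two_ne_zero (by nlinarith), log_mul (by linarith) (by linarith),
    log_mul ha0.ne' (by linarith)] at this
  linarith

theorem wSRWB_sub_eq : wSRWB y (s - y) = (1 + y / 2) * log (1 + y / 2) - (y / 2) * log (y / 2) := by
  obtain ⟨ha0, ha1⟩ := sub_mem_Ioo_of_sq_eq hy hs hs2
  have hsy : 0 < s + y := by linarith
  have e_a : log (s - y) = log 2 + log y - log (s + y) := by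
    have h := congrArg log (show (s - y) * (s + y) = 2 * y by linear_combination hs2)
    rw [log_mul ha0.ne' hsy.ne', log_mul two_ne_zero hy.ne'] at h
    linarith
  have e_1a : log (1 - (s - y)) = log 2 + log y - 2 * log (s + y) := by
    have h := congrArg log
      (show (1 - (s - y)) * ((s + y) * (s + y)) = 2 * y by linear_combination (1 - y - s) * hs2)
    rw [log_mul (by linarith) (by positivity), log_mul hsy.ne' hsy.ne',
      log_mul two_ne_zero hy.ne'] at h
    linarith
  have e_2a : log (2 - (s - y)) = log 2 + log s - log (s + y) := by
    have h := congrArg log (show (2 - (s - y)) * (s + y) = 2 * s by linear_combination -hs2)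
    rw [log_mul (by linarith) hsy.ne', log_mul two_ne_zero hs.ne'] at h
    linarith
  have e_s : log s = (log y + log (y + 2)) / 2 := by
    have h := congrArg log (show s * s = y * (y + 2) by linear_combination hs2)
    rw [log_mul hs.ne' hs.ne', log_mul hy.ne' (by linarith)] at h
    linarith
  have e_half : log (1 + y / 2) = log (y + 2) - log 2 := by
    rw [show 1 + y / 2 = (y + 2) / 2 by ring, log_div (by linarith) two_ne_zero]
  rw [wSRWB, sub_add_cancel, e_a, e_1a, e_2a, e_s, e_half, log_div hy.ne' two_ne_zero]
  ring

end CriticalPoint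

/-- For fixed `y > 0`, `x ↦ U(x,y) - I^SRWB(x)` is strictly concave on `(0,1)`, maximized at
`x = √(y(y+2)) - y`, with maximum value `𝒰^SRWB(y)`. -/
theorem WSRWB_strictConcave_max (y : ℝ) (hy : 0 < y) :
    StrictConcaveOn ℝ (Set.Ioo (0 : ℝ) 1)
      (fun x : ℝ => (x + y) * log (x + y) - x * log x - y * log y
        - ((2 - x) * log 2 + (1 - x) * log (1 - x) - (2 - x) * log (2 - x))) ∧
    (∀ x ∈ Set.Ioo (0 : ℝ) 1, x ≠ Real.sqrt (y * (y + 2)) - y →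
      ((x + y) * log (x + y) - x * log x - y * log y
        - ((2 - x) * log 2 + (1 - x) * log (1 - x) - (2 - x) * log (2 - x)))
      < ((Real.sqrt (y * (y + 2)) - y + y) * log (Real.sqrt (y * (y + 2)) - y + y)
          - (Real.sqrt (y * (y + 2)) - y) * log (Real.sqrt (y * (y + 2)) - y) - y * log y
        - ((2 - (Real.sqrt (y * (y + 2)) - y)) * log 2
          + (1 - (Real.sqrt (y * (y + 2)) - y)) * log (1 - (Real.sqrt (y * (y + 2)) - y))
          - (2 - (Real.sqrt (y * (y + 2)) - y)) * log (2 - (Real.sqrt (y * (y + 2)) - y))))) ∧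
    ((Real.sqrt (y * (y + 2)) - y + y) * log (Real.sqrt (y * (y + 2)) - y + y)
        - (Real.sqrt (y * (y + 2)) - y) * log (Real.sqrt (y * (y + 2)) - y) - y * log y
      - ((2 - (Real.sqrt (y * (y + 2)) - y)) * log 2
        + (1 - (Real.sqrt (y * (y + 2)) - y)) * log (1 - (Real.sqrt (y * (y + 2)) - y))
        - (2 - (Real.sqrt (y * (y + 2)) - y)) * log (2 - (Real.sqrt (y * (y + 2)) - y))))
      = (1 + y / 2) * log (1 + y / 2) - (y / 2) * log (y / 2) := by
  have hprod : 0 < y * (y + 2) := by positivity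
  have hs : 0 < √(y * (y + 2)) := sqrt_pos.2 hprod
  have hs2 : √(y * (y + 2)) ^ 2 = y * (y + 2) := sq_sqrt hprod.le
  have hconc := strictConcaveOn_wSRWB hy
  exact ⟨hconc,
    fun x hx hne ↦ hconc.lt_of_hasDerivAt_eq_zero (sub_mem_Ioo_of_sq_eq hy hs hs2) hx hne
      (hasDerivAt_wSRWB_sub_eq_zero hy hs hs2),
    wSRWB_sub_eq hy hs hs2⟩
end

section
/- For |t| < 1/16, sum_{n=0}^∞ binom(2n,n)² t^n = (2/π) K(16t), where K(z) = ∫₀¹ dx / sqrt((1-x²)(1-z x²)) is the complete elliptic integral of the first kind (Mathematica convention in the parameter z). -/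
/-!
Both series factors come from the binomial series
`(1 - u)^(-1/2) = ∑ binom(2n,n) (u/4)^n`. Expanding `(1 - 16 t x²)^(-1/2)` under the integral and
substituting `x = sin θ` turns `K(16t)` into `∑ binom(2n,n) (4t)^n ∫₀^{π/2} sin^{2n} θ dθ`, and the
Wallis integral `∫₀^{π/2} sin^{2n} θ dθ = (π/2) binom(2n,n)/4^n` supplies the second factor.
-/

open Real MeasureTheory Set

open Polynomial in
theorem Ring.succ_mul_choose_eq {K : Type*} [Field K] [CharZero K] (r : K) (k : ℕ) :
    (r + 1) * Ring.choose r k = Ring.choose (r + 1) (k + 1) * (k + 1) := by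
  have h := congrArg (fun p : ℤ[X] => p.smeval (r + 1)) (descPochhammer_succ_left ℤ k)
  simp only [smeval_mul, smeval_comp, smeval_sub, smeval_X, smeval_one, npow_one, npow_zero,
    mul_one, Ring.descPochhammer_eq_factorial_smul_choose, nsmul_eq_mul, Nat.factorial_succ] at h
  push_cast at h
  rw [add_sub_cancel_right] at h
  apply mul_left_cancel₀ (Nat.cast_ne_zero.mpr k.factorial_ne_zero)
  linear_combination -h

theorem Ring.choose_sub_half {K : Type*} [Field K] [CharZero K] (n : ℕ) :
    Ring.choose ((n : K) - 1 / 2) n = n.centralBinom / 4 ^ n := by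
  induction n with
  | zero => simp
  | succ n ih =>
    have h := Ring.succ_mul_choose_eq ((n : K) - 1 / 2) n
    have hc : ((n + 1 : ℕ) : K) * (n + 1).centralBinom = 2 * (2 * n + 1) * n.centralBinom := by
      exact_mod_cast Nat.succ_mul_centralBinom_succ n
    rw [ih] at h
    rw [Nat.cast_succ, show (n : K) + 1 - 1 / 2 = n - 1 / 2 + 1 by ring,
      eq_div_iff (pow_ne_zero _ (by norm_num))]
    push_cast at hc
    apply mul_left_cancel₀ (Nat.cast_add_one_ne_zero n)
    rw [pow_succ]
    generalize Ring.choose ((n : K) - 1 / 2 + 1) (n + 1) = C at h ⊢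
    field_simp at h
    linear_combination -2 * h - hc

theorem hasSum_centralBinom_div_four_pow_mul_pow {u : ℝ} (hu : |u| < 1) :
    HasSum (fun n => (n.centralBinom / 4 ^ n : ℝ) * u ^ n) (1 / √(1 - u)) := by
  have h := (one_div_one_sub_rpow_hasFPowerSeriesOnBall_zero (1 / 2)).hasSum
    (y := u) (by simpa [enorm_eq_nnnorm, ← NNReal.coe_lt_one] using hu)
  simp only [FormalMultilinearSeries.ofScalars_apply_eq, smul_eq_mul, zero_add] at h
  have hcoeff (n : ℕ) : Ring.choose (1 / 2 + n - 1 : ℝ) n = n.centralBinom / 4 ^ n := by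
    rw [← Ring.choose_sub_half]; ring_nf
  simpa only [hcoeff, sqrt_eq_rpow] using h

theorem integral_sin_pow_even_pi_div_two (n : ℕ) :
    ∫ θ in (0 : ℝ)..π / 2, sin θ ^ (2 * n) = π / 2 * (n.centralBinom / 4 ^ n) := by
  induction n with
  | zero => simp
  | succ n ih =>
    have hc : ((n + 1 : ℕ) : ℝ) * (n + 1).centralBinom = 2 * (2 * n + 1) * n.centralBinom := by
      exact_mod_cast Nat.succ_mul_centralBinom_succ n
    rw [mul_add_one, integral_sin_pow, ih, sin_zero, cos_pi_div_two, zero_pow (by omega),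
      zero_mul, mul_zero, sub_zero, zero_div, zero_add, pow_succ]
    push_cast at hc ⊢
    field_simp
    linear_combination -2 * hc

/-- The integrand may blow up at `x = 1`, but the change-of-variables formula for injective
differentiable maps needs no continuity. -/
theorem integral_div_sqrt_one_sub_sq_eq_integral_sin (g : ℝ → ℝ) :
    ∫ x in (0 : ℝ)..1, g x / √(1 - x ^ 2) = ∫ θ in (0 : ℝ)..π / 2, g (sin θ) := by
  have hsub : Icc 0 (π / 2) ⊆ Icc (-(π / 2)) (π / 2) := Icc_subset_Icc (by linarith [pi_pos]) le_rfl
  have himage : sin '' Ioo 0 (π / 2) = Ioo 0 1 := by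
    rw [continuous_sin.continuousOn.image_Ioo_of_strictMonoOn pi_div_two_pos.le
      (strictMonoOn_sin.mono hsub), sin_zero, sin_pi_div_two]
  rw [intervalIntegral.integral_of_le zero_le_one, integral_Ioc_eq_integral_Ioo, ← himage,
    integral_image_eq_integral_abs_deriv_smul measurableSet_Ioo
      (fun θ _ => (hasDerivAt_sin θ).hasDerivWithinAt)
      (strictMonoOn_sin.injOn.mono (Ioo_subset_Icc_self.trans hsub)),
    intervalIntegral.integral_of_le pi_div_two_pos.le, integral_Ioc_eq_integral_Ioo]
  refine setIntegral_congr_fun measurableSet_Ioo fun θ hθ => ?_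
  have hcos : 0 < cos θ := cos_pos_of_mem_Ioo ⟨by linarith [hθ.1, pi_pos], hθ.2⟩
  rw [← cos_sq', sqrt_sq hcos.le, abs_of_pos hcos, smul_eq_mul]
  field_simp

theorem hasSum_integral_one_div_sqrt_one_sub_mul_sin_sq {u : ℝ} (hu : |u| < 1) :
    HasSum (fun n => π / 2 * (n.centralBinom / 4 ^ n : ℝ) ^ 2 * u ^ n)
      (∫ θ in (0 : ℝ)..π / 2, 1 / √(1 - u * sin θ ^ 2)) := by
  have hsin (θ : ℝ) : |u * sin θ ^ 2| ≤ |u| := by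
    rw [abs_mul, abs_pow]
    exact mul_le_of_le_one_right (abs_nonneg u) (pow_le_one₀ (abs_nonneg _) (abs_sin_le_one θ))
  have hbound (n : ℕ) (θ : ℝ) :
      ‖(n.centralBinom / 4 ^ n : ℝ) * (u * sin θ ^ 2) ^ n‖ ≤ |u| ^ n := by
    have hc : (n.centralBinom / 4 ^ n : ℝ) ≤ 1 :=
      div_le_one_of_le₀ (mod_cast n.centralBinom_le_four_pow) (by positivity)
    rw [norm_mul, norm_pow, Real.norm_eq_abs, Real.norm_eq_abs, abs_of_nonneg (by positivity)]
    simpa using mul_le_mul hc (pow_le_pow_left₀ (abs_nonneg _) (hsin θ) n) (by positivity)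
      zero_le_one
  have hsum : HasSum
      (fun n => ∫ θ in (0 : ℝ)..π / 2, (n.centralBinom / 4 ^ n : ℝ) * (u * sin θ ^ 2) ^ n)
      (∫ θ in (0 : ℝ)..π / 2, 1 / √(1 - u * sin θ ^ 2)) := by
    refine intervalIntegral.hasSum_integral_of_dominated_convergence (fun n _ => |u| ^ n)
      (fun n => by fun_prop) (fun n => .of_forall fun θ _ => hbound n θ)
      (.of_forall fun _ _ => summable_geometric_of_lt_one (abs_nonneg u) hu)
      intervalIntegrable_const (.of_forall fun θ _ => ?_)
    exact hasSum_centralBinom_div_four_pow_mul_pow ((hsin θ).trans_lt hu)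
  convert hsum using 2 with n
  simp_rw [mul_pow, ← pow_mul]
  rw [intervalIntegral.integral_const_mul, intervalIntegral.integral_const_mul,
    integral_sin_pow_even_pi_div_two]
  ring

/-- For `|t| < 1/16`, `∑ binom(2n,n)² tⁿ = (2/π)·K(16t)` with
`K(z) = ∫₀¹ dx/√((1-x²)(1-zx²))`. -/
theorem centralBinom_sq_generating_function (t : ℝ) (ht : |t| < 1 / 16) :
    ∑' n : ℕ, ((2 * n).choose n : ℝ) ^ 2 * t ^ n
      = (2 / Real.pi) * ∫ x in (0 : ℝ)..1, 1 / Real.sqrt ((1 - x ^ 2) * (1 - 16 * t * x ^ 2)) := by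
  have hu : |16 * t| < 1 := by rw [abs_mul, abs_of_pos (by norm_num : (0 : ℝ) < 16)]; linarith
  have hintegrand : ∀ x ∈ uIcc (0 : ℝ) 1,
      1 / √((1 - x ^ 2) * (1 - 16 * t * x ^ 2)) = 1 / √(1 - 16 * t * x ^ 2) / √(1 - x ^ 2) := by
    intro x hx
    rw [uIcc_of_le zero_le_one] at hx
    rw [sqrt_mul (by nlinarith [hx.1, hx.2])]
    ring
  rw [intervalIntegral.integral_congr hintegrand,
    integral_div_sqrt_one_sub_sq_eq_integral_sin (fun x => 1 / √(1 - 16 * t * x ^ 2)),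
    ← ((hasSum_integral_one_div_sqrt_one_sub_mul_sin_sq hu).mul_left (2 / π)).tsum_eq]
  refine tsum_congr fun n => ?_
  have h16 : (16 : ℝ) ^ n = (4 ^ n) ^ 2 := by rw [← pow_mul, mul_comm, pow_mul]; norm_num
  rw [← Nat.centralBinom_eq_two_mul_choose]
  field_simp
  rw [mul_pow, h16]
  ring
end
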